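/- arXiv:1311.0195 — 13 statements merged into one kernel-verified Lean document; each statement's English description precedes it below -/
import Mathlib

section
/- Let X_1, …, X_N be i.i.d. Bernoulli random variables with success probability p ≤ e^{−nβ}, where N = e^{nα}, n is a positive integer, α > 0, β ≥ α, and ρ > 0. Then E[(1 + Σ_{i=1}^N X_i)^ρ] ≤ 1 + γ e^{n(α−β)}, where γ = max{e^{e^ρ−1}, (⌈ρ⌉!)² ⌈ρ⌉}. -/
/-!
Since `log (1 + x) ≤ x`, the moment is at most the moment generating function of `S = ∑ Xᵢ` at
`ρ`, which by independence is `(1 + (e^ρ - 1) p)^N ≤ exp ((e^ρ - 1) N p)`. As `N p ≤ e^{n(α-β)} ≤ 1`,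
convexity of `exp` on `[0, e^ρ - 1]` bounds this by `1 + N p (e^{e^ρ - 1} - 1) ≤ 1 + e^{e^ρ-1} e^{n(α-β)}`.
-/

open MeasureTheory ProbabilityTheory Real

lemma one_add_rpow_le_exp_mul {x ρ : ℝ} (hx : -1 < x) (hρ : 0 ≤ ρ) :
    (1 + x) ^ ρ ≤ exp (ρ * x) := by
  have hlog : log (1 + x) ≤ x := by linarith [log_le_sub_one_of_pos (x := 1 + x) (by linarith)]
  rw [rpow_def_of_pos (by linarith), mul_comm ρ]
  exact exp_le_exp.2 (mul_le_mul_of_nonneg_right hlog hρ)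

lemma exp_mul_le_one_add_mul_exp_sub_one {s c : ℝ} (hs₀ : 0 ≤ s) (hs₁ : s ≤ 1) :
    exp (s * c) ≤ 1 + s * (exp c - 1) := by
  have h := convexOn_exp.2 (Set.mem_univ 0) (Set.mem_univ c) (by linarith : 0 ≤ 1 - s) hs₀
    (by ring)
  simp only [smul_eq_mul, mul_zero, zero_add, exp_zero, mul_one] at h
  linarith

lemma one_add_mul_pow_le {c q : ℝ} {N : ℕ} (hc : 0 ≤ c) (hq : 0 ≤ q) (hNq : N * q ≤ 1) :
    (1 + c * q) ^ N ≤ 1 + N * q * (exp c - 1) :=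
  calc (1 + c * q) ^ N ≤ exp (c * q) ^ N := by
        gcongr
        linarith [add_one_le_exp (c * q)]
    _ = exp ((N * q) * c) := by rw [← exp_nat_mul]; ring_nf
    _ ≤ 1 + N * q * (exp c - 1) :=
        exp_mul_le_one_add_mul_exp_sub_one (by positivity) hNq

section Bernoulli

variable {Ω : Type*} [MeasurableSpace Ω] {μ : Measure Ω} [IsProbabilityMeasure μ]

lemma mgf_eq_of_forall_eq_zero_or_eq_one {X : Ω → ℝ} (hX : Measurable X)
    (hval : ∀ ω, X ω = 0 ∨ X ω = 1) (t : ℝ) :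
    mgf X μ t = 1 + (exp t - 1) * μ.real {ω | X ω = 1} := by
  have hA : MeasurableSet {ω | X ω = 1} := hX (measurableSet_singleton 1)
  have hpt : (fun ω ↦ exp (t * X ω)) =
      fun ω ↦ 1 + (exp t - 1) * Set.indicator {ω | X ω = 1} 1 ω := by
    funext ω
    rcases hval ω with h | h <;> simp [h]
  rw [mgf, hpt, integral_add (integrable_const 1) (((integrable_const 1).indicator hA).const_mul _),
    integral_const_mul, integral_indicator_one hA]
  simp

lemma integral_one_add_sum_rpow_le {ι : Type*} [Fintype ι] {X : ι → Ω → ℝ}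
    (hmeas : ∀ i, Measurable (X i)) (hval : ∀ i ω, X i ω = 0 ∨ X i ω = 1)
    (hindep : iIndepFun X μ) {q : ℝ} (hq : ∀ i, μ.real {ω | X i ω = 1} = q)
    {ρ : ℝ} (hρ : 0 ≤ ρ) :
    ∫ ω, (1 + ∑ i, X i ω) ^ ρ ∂μ ≤ (1 + (exp ρ - 1) * q) ^ Fintype.card ι := by
  have hS_nonneg : ∀ ω, 0 ≤ ∑ i, X i ω := fun ω ↦
    Finset.sum_nonneg fun i _ ↦ by rcases hval i ω with h | h <;> simp [h]
  have hint : Integrable (fun ω ↦ exp (ρ * (∑ i, X i) ω)) μ :=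
    hindep.integrable_exp_mul_sum hmeas fun i _ ↦ integrable_exp_mul_of_le ρ 1 hρ
      (hmeas i).aemeasurable (ae_of_all _ fun ω ↦ by rcases hval i ω with h | h <;> simp [h])
  calc ∫ ω, (1 + ∑ i, X i ω) ^ ρ ∂μ ≤ mgf (∑ i, X i) μ ρ := by
        refine integral_mono_of_nonneg (ae_of_all _ fun ω ↦ ?_) hint (ae_of_all _ fun ω ↦ ?_)
        · exact rpow_nonneg (by linarith [hS_nonneg ω]) ρ
        · simpa only [Finset.sum_apply] using
            one_add_rpow_le_exp_mul (by linarith [hS_nonneg ω]) hρ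
    _ = ∏ i, mgf (X i) μ ρ := hindep.mgf_sum hmeas Finset.univ
    _ = (1 + (exp ρ - 1) * q) ^ Fintype.card ι := by
        simp [mgf_eq_of_forall_eq_zero_or_eq_one (hmeas _) (hval _), hq]

end Bernoulli

theorem binomial_one_add_rpow_moment_le_of_le_general {Ω : Type*} [MeasurableSpace Ω]
    (μ : Measure Ω) [IsProbabilityMeasure μ]
    (n : ℕ) (α β ρ p : ℝ) (hβ : α ≤ β) (hρ : 0 < ρ)
    (N : ℕ) (hN : N = ⌊Real.exp (n * α)⌋₊)
    (X : Fin N → Ω → ℝ) (hmeas : ∀ i, Measurable (X i))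
    (hval : ∀ i ω, X i ω = 0 ∨ X i ω = 1)
    (hindep : iIndepFun X μ)
    (hid : ∀ i, μ {ω | X i ω = 1} = ENNReal.ofReal p)
    (hp : p ≤ Real.exp (-(n * β))) :
    ∫ ω, (1 + ∑ i, X i ω) ^ ρ ∂μ ≤
      1 + max (Real.exp (Real.exp ρ - 1)) (((Nat.factorial ⌈ρ⌉₊ : ℝ)) ^ 2 * (⌈ρ⌉₊ : ℝ))
            * Real.exp (n * (α - β)) := by
  set t := exp (n * (α - β))
  -- `ENNReal.ofReal` clips a negative `p` to `0`.
  set q := max p 0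
  have hc : 0 ≤ exp ρ - 1 := by linarith [one_le_exp hρ.le]
  have hq : ∀ i, μ.real {ω | X i ω = 1} = q := fun i ↦ by
    rw [measureReal_def, hid i, ENNReal.toReal_ofReal']
  have hNq : N * q ≤ t :=
    calc N * q ≤ exp (n * α) * exp (-(n * β)) := by
          gcongr
          · exact hN ▸ Nat.floor_le (exp_pos _).le
          · exact max_le hp (exp_pos _).le
      _ = t := by rw [← exp_add, ← sub_eq_add_neg, ← mul_sub]
  have ht : t ≤ 1 := exp_le_one_iff.2 (mul_nonpos_of_nonneg_of_nonpos n.cast_nonneg (by linarith))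
  calc ∫ ω, (1 + ∑ i, X i ω) ^ ρ ∂μ ≤ (1 + (exp ρ - 1) * q) ^ N := by
        simpa using integral_one_add_sum_rpow_le hmeas hval hindep hq hρ.le
    _ ≤ 1 + N * q * (exp (exp ρ - 1) - 1) :=
        one_add_mul_pow_le hc (le_max_right p 0) (hNq.trans ht)
    _ ≤ 1 + t * exp (exp ρ - 1) := by
        have he : 0 ≤ exp (exp ρ - 1) - 1 := by linarith [one_le_exp hc]
        nlinarith [mul_le_mul_of_nonneg_right hNq he, exp_pos (n * (α - β))]
    _ ≤ 1 + max (exp (exp ρ - 1)) ((⌈ρ⌉₊.factorial : ℝ) ^ 2 * ⌈ρ⌉₊) * t := by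
        rw [mul_comm t]
        gcongr
        exact le_max_left _ _

/-- IID Bernoulli variables `X 1, …, X N` with success probability `p ≤ e^{−nβ}`,
`N = ⌊e^{nα}⌋`, `n ≥ 1`, `α > 0`, `β ≥ α`, `ρ > 0`:
`E[(1 + ∑ X i)^ρ] ≤ 1 + γ e^{n(α−β)}` with `γ = max{e^{e^ρ−1}, (⌈ρ⌉!)² ⌈ρ⌉}`. -/
theorem binomial_one_add_rpow_moment_le_of_le {Ω : Type*} [MeasurableSpace Ω]
    (μ : Measure Ω) [IsProbabilityMeasure μ]
    (n : ℕ) (hn : 0 < n) (α β ρ p : ℝ) (hα : 0 < α) (hβ : α ≤ β) (hρ : 0 < ρ)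
    (N : ℕ) (hN : N = ⌊Real.exp (n * α)⌋₊)
    (X : Fin N → Ω → ℝ) (hmeas : ∀ i, Measurable (X i))
    (hval : ∀ i ω, X i ω = 0 ∨ X i ω = 1)
    (hindep : iIndepFun X μ)
    (hid : ∀ i, μ {ω | X i ω = 1} = ENNReal.ofReal p)
    (hp : p ≤ Real.exp (-(n * β))) :
    ∫ ω, (1 + ∑ i, X i ω) ^ ρ ∂μ ≤
      1 + max (Real.exp (Real.exp ρ - 1)) (((Nat.factorial ⌈ρ⌉₊ : ℝ)) ^ 2 * (⌈ρ⌉₊ : ℝ))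
            * Real.exp (n * (α - β)) :=
  binomial_one_add_rpow_moment_le_of_le_general μ n α β ρ p hβ hρ N hN X hmeas hval hindep hid hp
end

section
/- Let X_1, …, X_N be i.i.d. Bernoulli random variables with success probability p ≤ e^{−nβ}, where N = e^{nα}, n is a positive integer, α > 0, 0 ≤ β < α, and ρ > 0. Then E[(1 + Σ_{i=1}^N X_i)^ρ] ≤ γ e^{nρ(α−β)}, where γ = max{e^{e^ρ−1}, (⌈ρ⌉!)² ⌈ρ⌉}. -/
/-!
The binomial sum `S = ∑ Xᵢ` has mean `N p ≤ λ := e^{n(α-β)}`, and its moment generating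
function is dominated by that of a Poisson variable of mean `λ`: `E[e^{tS}] ≤ e^{λ(e^t-1)}`.
Writing `(1 + S)^ρ = λ^ρ ((1 + S)/λ)^ρ` and using `z^ρ ≤ e^{ρ(z-1)}` at `z = (1 + S)/λ` turns the
moment into a value of the moment generating function at `t = ρ/λ`. Since `λ ≥ 1`, convexity of
`exp` gives `λ(e^{ρ/λ} - 1) ≤ e^ρ - 1`, so `E[(1 + S)^ρ] ≤ e^{e^ρ-1} λ^ρ`; this is already the
first term of the maximum.
-/

open MeasureTheory ProbabilityTheory Real

lemma Real.rpow_le_exp_mul_sub_one {z ρ : ℝ} (hz : 0 ≤ z) (hρ : 0 ≤ ρ) :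
    z ^ ρ ≤ exp (ρ * (z - 1)) :=
  calc z ^ ρ ≤ exp (z - 1) ^ ρ := rpow_le_rpow hz (by linarith [add_one_le_exp (z - 1)]) hρ
    _ = exp (ρ * (z - 1)) := by rw [← exp_mul, mul_comm]

lemma Real.mul_exp_div_sub_one_le {u : ℝ} (hu : 1 ≤ u) (ρ : ℝ) :
    u * (exp (ρ / u) - 1) ≤ exp ρ - 1 := by
  have hu0 : 0 < u := by linarith
  have hconv := convexOn_exp.2 (Set.mem_univ 0) (Set.mem_univ ρ)
    (sub_nonneg.2 (inv_le_one_of_one_le₀ hu)) (inv_nonneg.2 hu0.le) (sub_add_cancel 1 u⁻¹)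
  simp only [smul_eq_mul, mul_zero, zero_add, exp_zero, mul_one] at hconv
  rw [inv_mul_eq_div] at hconv
  have := mul_le_mul_of_nonneg_left hconv hu0.le
  field_simp at this ⊢
  linarith

section PoissonDominated

variable {Ω : Type*} [MeasurableSpace Ω] {μ : Measure Ω} {S : Ω → ℝ} {u ρ : ℝ}

theorem integral_one_add_rpow_le_of_mgf_le (hS : ∀ᵐ ω ∂μ, 0 ≤ S ω) (hu : 1 ≤ u) (hρ : 0 ≤ ρ)
    (hint : ∀ t, 0 ≤ t → Integrable (fun ω => exp (t * S ω)) μ)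
    (hmgf : ∀ t, 0 ≤ t → mgf S μ t ≤ exp (u * (exp t - 1))) :
    ∫ ω, (1 + S ω) ^ ρ ∂μ ≤ exp (exp ρ - 1) * u ^ ρ := by
  have hu0 : 0 < u := by linarith
  set t := ρ / u with ht_def
  have ht : 0 ≤ t := div_nonneg hρ hu0.le
  have hpoint : ∀ᵐ ω ∂μ, (1 + S ω) ^ ρ ≤ u ^ ρ * exp (t - ρ) * exp (t * S ω) := by
    filter_upwards [hS] with ω hω
    have hz : 0 ≤ (1 + S ω) / u := div_nonneg (by linarith [hω]) hu0.le
    calc (1 + S ω) ^ ρ = u ^ ρ * ((1 + S ω) / u) ^ ρ := by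
          rw [← mul_rpow hu0.le hz, mul_div_cancel₀ _ hu0.ne']
      _ ≤ u ^ ρ * exp (ρ * ((1 + S ω) / u - 1)) :=
          mul_le_mul_of_nonneg_left (rpow_le_exp_mul_sub_one hz hρ) (by positivity)
      _ = u ^ ρ * exp (t - ρ) * exp (t * S ω) := by
          rw [mul_assoc, ← exp_add, ht_def]
          congr 2
          ring
  have hexponent : t - ρ + u * (exp t - 1) ≤ exp ρ - 1 := by
    have : t ≤ ρ := div_le_self hρ hu
    linarith [mul_exp_div_sub_one_le hu ρ]
  calc ∫ ω, (1 + S ω) ^ ρ ∂μ ≤ ∫ ω, u ^ ρ * exp (t - ρ) * exp (t * S ω) ∂μ :=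
        integral_mono_of_nonneg (hS.mono fun ω hω => rpow_nonneg (by linarith [hω]) ρ)
          ((hint t ht).const_mul _) hpoint
    _ = u ^ ρ * exp (t - ρ) * mgf S μ t := integral_const_mul _ _
    _ ≤ u ^ ρ * exp (t - ρ) * exp (u * (exp t - 1)) :=
        mul_le_mul_of_nonneg_left (hmgf t ht) (by positivity)
    _ ≤ exp (exp ρ - 1) * u ^ ρ := by
        rw [mul_assoc, ← exp_add, mul_comm]
        exact mul_le_mul_of_nonneg_right (exp_le_exp.2 hexponent) (by positivity)

end PoissonDominated

lemma Real.exp_mul_eq_one_add_mul_of_eq_zero_or_eq_one {x : ℝ} (hx : x = 0 ∨ x = 1) (t : ℝ) :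
    exp (t * x) = 1 + (exp t - 1) * x := by
  rcases hx with rfl | rfl <;> simp

section Bernoulli

variable {Ω : Type*} [MeasurableSpace Ω] {μ : Measure Ω} {X : Ω → ℝ}

lemma integrable_of_eq_zero_or_eq_one [IsFiniteMeasure μ] (hX : Measurable X)
    (hval : ∀ ω, X ω = 0 ∨ X ω = 1) : Integrable X μ :=
  Integrable.of_mem_Icc 0 1 hX.aemeasurable
    (ae_of_all _ fun ω => by rcases hval ω with h | h <;> simp [h])

lemma integral_eq_measureReal_of_eq_zero_or_eq_one (hX : Measurable X)
    (hval : ∀ ω, X ω = 0 ∨ X ω = 1) : ∫ ω, X ω ∂μ = μ.real {ω | X ω = 1} := by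
  have hind : X = {ω | X ω = 1}.indicator 1 := by
    funext ω
    rcases hval ω with h | h <;> simp [h]
  conv_lhs => rw [hind]
  exact integral_indicator_one (hX (measurableSet_singleton 1))

lemma integrable_exp_mul_of_eq_zero_or_eq_one [IsFiniteMeasure μ] (hX : Measurable X)
    (hval : ∀ ω, X ω = 0 ∨ X ω = 1) (t : ℝ) : Integrable (fun ω => exp (t * X ω)) μ := by
  simp only [exp_mul_eq_one_add_mul_of_eq_zero_or_eq_one (hval _)]
  exact (integrable_const 1).add ((integrable_of_eq_zero_or_eq_one hX hval).const_mul _)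

lemma mgf_eq_of_eq_zero_or_eq_one [IsProbabilityMeasure μ] (hX : Measurable X)
    (hval : ∀ ω, X ω = 0 ∨ X ω = 1) (t : ℝ) :
    mgf X μ t = 1 + μ.real {ω | X ω = 1} * (exp t - 1) := by
  simp only [mgf, exp_mul_eq_one_add_mul_of_eq_zero_or_eq_one (hval _)]
  rw [integral_add (integrable_const 1) ((integrable_of_eq_zero_or_eq_one hX hval).const_mul _),
    integral_const, integral_const_mul, integral_eq_measureReal_of_eq_zero_or_eq_one hX hval]
  simp [mul_comm]

theorem mgf_sum_le_exp_of_eq_zero_or_eq_one {ι : Type*} [Fintype ι] {X : ι → Ω → ℝ}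
    (hmeas : ∀ i, Measurable (X i)) (hval : ∀ i ω, X i ω = 0 ∨ X i ω = 1)
    (hindep : iIndepFun X μ) {q t : ℝ} (hq : ∀ i, μ.real {ω | X i ω = 1} ≤ q) (ht : 0 ≤ t) :
    mgf (∑ i, X i) μ t ≤ exp (Fintype.card ι * q * (exp t - 1)) := by
  have := hindep.isProbabilityMeasure
  have het : 0 ≤ exp t - 1 := sub_nonneg.2 (one_le_exp ht)
  have hle : ∀ i, mgf (X i) μ t ≤ exp (q * (exp t - 1)) := fun i => by
    rw [mgf_eq_of_eq_zero_or_eq_one (hmeas i) (hval i)]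
    linarith [mul_le_mul_of_nonneg_right (hq i) het, add_one_le_exp (q * (exp t - 1))]
  calc mgf (∑ i, X i) μ t = ∏ i, mgf (X i) μ t := hindep.mgf_sum hmeas _
    _ ≤ ∏ _i : ι, exp (q * (exp t - 1)) :=
        Finset.prod_le_prod (fun _ _ => mgf_nonneg) (fun i _ => hle i)
    _ = exp (Fintype.card ι * q * (exp t - 1)) := by
        rw [Finset.prod_const, Finset.card_univ, ← exp_nat_mul, mul_assoc]

end Bernoulli

theorem binomial_one_add_rpow_moment_le_of_lt_general {Ω : Type*} [MeasurableSpace Ω]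
    (μ : Measure Ω)
    (n : ℕ) (α β ρ p : ℝ) (hβ : β < α) (hρ : 0 < ρ)
    (N : ℕ) (hN : N = ⌊Real.exp (n * α)⌋₊)
    (X : Fin N → Ω → ℝ) (hmeas : ∀ i, Measurable (X i))
    (hval : ∀ i ω, X i ω = 0 ∨ X i ω = 1)
    (hindep : iIndepFun X μ)
    (hid : ∀ i, μ {ω | X i ω = 1} = ENNReal.ofReal p)
    (hp : p ≤ Real.exp (-(n * β))) :
    ∫ ω, (1 + ∑ i, X i ω) ^ ρ ∂μ ≤
      max (Real.exp (Real.exp ρ - 1)) (((Nat.factorial ⌈ρ⌉₊ : ℝ)) ^ 2 * (⌈ρ⌉₊ : ℝ))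
            * Real.exp (n * ρ * (α - β)) := by
  have := hindep.isProbabilityMeasure
  set lam := exp (n * (α - β))
  have hlam : 1 ≤ lam := one_le_exp (mul_nonneg n.cast_nonneg (sub_nonneg.2 hβ.le))
  have hq : ∀ i, μ.real {ω | X i ω = 1} ≤ exp (-(n * β)) := fun i => by
    rw [measureReal_def, hid i, ENNReal.toReal_ofReal']
    exact max_le hp (exp_pos _).le
  have hmean : (Fintype.card (Fin N) : ℝ) * exp (-(n * β)) ≤ lam :=
    calc (Fintype.card (Fin N) : ℝ) * exp (-(n * β)) ≤ exp (n * α) * exp (-(n * β)) := by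
          rw [Fintype.card_fin, hN]
          exact mul_le_mul_of_nonneg_right (Nat.floor_le (exp_pos _).le) (exp_pos _).le
      _ = lam := by rw [← exp_add]; simp only [lam]; ring_nf
  have hmgf : ∀ t, 0 ≤ t → mgf (∑ i, X i) μ t ≤ exp (lam * (exp t - 1)) := fun t ht =>
    (mgf_sum_le_exp_of_eq_zero_or_eq_one hmeas hval hindep hq ht).trans <| exp_le_exp.2 <|
      mul_le_mul_of_nonneg_right hmean (sub_nonneg.2 (one_le_exp ht))
  have hS0 : ∀ ω, 0 ≤ (∑ i, X i) ω := fun ω => by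
    rw [Finset.sum_apply]
    exact Finset.sum_nonneg fun i _ => by rcases hval i ω with h | h <;> simp [h]
  have hint : ∀ t, 0 ≤ t → Integrable (fun ω => exp (t * (∑ i, X i) ω)) μ := fun t _ =>
    hindep.integrable_exp_mul_sum hmeas
      fun i _ => integrable_exp_mul_of_eq_zero_or_eq_one (hmeas i) (hval i) t
  have hmoment := integral_one_add_rpow_le_of_mgf_le (ae_of_all _ hS0) hlam hρ.le hint hmgf
  simp only [Finset.sum_apply] at hmoment
  calc ∫ ω, (1 + ∑ i, X i ω) ^ ρ ∂μ ≤ exp (exp ρ - 1) * lam ^ ρ := hmoment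
    _ ≤ _ * lam ^ ρ := mul_le_mul_of_nonneg_right (le_max_left _ _) (by positivity)
    _ = _ := by rw [← exp_mul]; ring_nf

/-- IID Bernoulli variables `X 1, …, X N` with success probability `p ≤ e^{−nβ}`,
`N = ⌊e^{nα}⌋`, `n ≥ 1`, `α > 0`, `0 ≤ β < α`, `ρ > 0`:
`E[(1 + ∑ X i)^ρ] ≤ γ e^{nρ(α−β)}` with `γ = max{e^{e^ρ−1}, (⌈ρ⌉!)² ⌈ρ⌉}`. -/
theorem binomial_one_add_rpow_moment_le_of_lt {Ω : Type*} [MeasurableSpace Ω]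
    (μ : Measure Ω) [IsProbabilityMeasure μ]
    (n : ℕ) (hn : 0 < n) (α β ρ p : ℝ) (hα : 0 < α) (hβ0 : 0 ≤ β) (hβ : β < α) (hρ : 0 < ρ)
    (N : ℕ) (hN : N = ⌊Real.exp (n * α)⌋₊)
    (X : Fin N → Ω → ℝ) (hmeas : ∀ i, Measurable (X i))
    (hval : ∀ i ω, X i ω = 0 ∨ X i ω = 1)
    (hindep : iIndepFun X μ)
    (hid : ∀ i, μ {ω | X i ω = 1} = ENNReal.ofReal p)
    (hp : p ≤ Real.exp (-(n * β))) :
    ∫ ω, (1 + ∑ i, X i ω) ^ ρ ∂μ ≤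
      max (Real.exp (Real.exp ρ - 1)) (((Nat.factorial ⌈ρ⌉₊ : ℝ)) ^ 2 * (⌈ρ⌉₊ : ℝ))
            * Real.exp (n * ρ * (α - β)) :=
  binomial_one_add_rpow_moment_le_of_lt_general μ n α β ρ p hβ hρ N hN X hmeas hval hindep hid hp
end

section
/- Let X_1, …, X_N be i.i.d. {0,1}-valued random variables with E[X_1] ≤ e^{−nβ}, where N = e^{nα}, β ≥ α > 0, and k a positive integer. Then E[(Σ_{i=1}^N X_i)^k] ≤ (k!)² k · e^{n(α−β)}. -/
/-!
With `S = ∑ i, X i`, pointwise `S ^ k ≤ k ^ k ∑_{r=1}^k (S choose r)`, and for {0,1}-valued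
variables `S choose r` is the sum of the products `∏_{i ∈ A} X i` over the `r`-subsets `A`.
By independence each such product has mean `p ^ r`, so
`E[S ^ k] ≤ k ^ k ∑_{r=1}^k (N choose r) p ^ r`.
Since `N p ≤ e^{n(α-β)} ≤ 1`, every term is at most `(N p) ^ r ≤ N p`, and `k ^ k ≤ (k!)²`.
-/

open Finset MeasureTheory ProbabilityTheory

namespace Nat

theorem pow_self_le_factorial_sq (k : ℕ) : k ^ k ≤ k ! ^ 2 := by
  have hrev : k ! = ∏ i ∈ range k, (k - i) := by
    rw [← descFactorial_self, descFactorial_eq_prod_range]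
  calc k ^ k = ∏ _i ∈ range k, k := by rw [prod_const, card_range]
    _ ≤ ∏ i ∈ range k, (i + 1) * (k - i) := by
        refine prod_le_prod' fun i hi => ?_
        have hik : i < k := mem_range.mp hi
        -- `(i + 1) (k - i) - k = i (k - i - 1)`
        have : i * 1 ≤ i * (k - i) := Nat.mul_le_mul_left i (by omega)
        rw [add_one_mul]
        omega
    _ = k ! ^ 2 := by rw [sq, prod_mul_distrib, prod_range_add_one_eq_factorial, ← hrev]

theorem pow_le_pow_self_mul_choose {m k : ℕ} (hkm : k ≤ m) : m ^ k ≤ k ^ k * m.choose k := by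
  have hrev : k ! = ∏ i ∈ range k, (k - i) := by
    rw [← descFactorial_self, descFactorial_eq_prod_range]
  refine Nat.le_of_mul_le_mul_left ?_ k.factorial_pos
  calc k ! * m ^ k = ∏ i ∈ range k, (k - i) * m := by
        rw [prod_mul_distrib, ← hrev, prod_const, card_range]
    _ ≤ ∏ i ∈ range k, k * (m - i) := by
        refine prod_le_prod' fun i _ => ?_
        -- `(k - i) m ≤ k (m - i)` amounts to `k i ≤ m i`
        rw [Nat.sub_mul, Nat.mul_sub, mul_comm k i]
        exact Nat.sub_le_sub_left (Nat.mul_le_mul_left i hkm) _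
    _ = k ! * (k ^ k * m.choose k) := by
        rw [prod_mul_distrib, prod_const, card_range, ← descFactorial_eq_prod_range,
          descFactorial_eq_factorial_mul_choose]
        ring

theorem pow_le_pow_self_mul_sum_choose {m k : ℕ} (hk : 0 < k) :
    m ^ k ≤ k ^ k * ∑ r ∈ Icc 1 k, m.choose r := by
  rcases Nat.eq_zero_or_pos m with rfl | hm
  · simp [Nat.zero_pow hk]
  rcases le_total m k with hmk | hkm
  · calc m ^ k ≤ k ^ k * m.choose m := by
          rw [choose_self, mul_one]; exact Nat.pow_le_pow_left hmk k
      _ ≤ k ^ k * ∑ r ∈ Icc 1 k, m.choose r :=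
          Nat.mul_le_mul_left _ (single_le_sum (fun _ _ => Nat.zero_le _) (mem_Icc.mpr ⟨hm, hmk⟩))
  · calc m ^ k ≤ k ^ k * m.choose k := pow_le_pow_self_mul_choose hkm
      _ ≤ k ^ k * ∑ r ∈ Icc 1 k, m.choose r :=
          Nat.mul_le_mul_left _
            (single_le_sum (fun _ _ => Nat.zero_le _) (mem_Icc.mpr ⟨hk, le_rfl⟩))

end Nat

section ZeroOne

variable {ι R : Type*} [CommSemiring R] [DecidableEq R] {x : ι → R}

theorem eq_ite_eq_one_of_eq_zero_or_one (hx : ∀ i, x i = 0 ∨ x i = 1) (i : ι) :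
    x i = if x i = 1 then 1 else 0 := by
  rcases hx i with h | h <;> simp [h]

variable [Fintype ι]

theorem sum_eq_card_of_eq_zero_or_one (hx : ∀ i, x i = 0 ∨ x i = 1) :
    ∑ i, x i = #{i | x i = 1} := by
  rw [← sum_boole]
  exact sum_congr rfl fun i _ => eq_ite_eq_one_of_eq_zero_or_one hx i

theorem sum_powersetCard_prod_of_eq_zero_or_one (hx : ∀ i, x i = 0 ∨ x i = 1) (r : ℕ) :
    ∑ A ∈ powersetCard r univ, ∏ i ∈ A, x i = (#{i | x i = 1}).choose r := by
  have hfilter : {A ∈ powersetCard r (univ : Finset ι) | ∀ i ∈ A, x i = 1} =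
      powersetCard r {i | x i = 1} := by
    ext A
    simp only [mem_filter, mem_powersetCard, subset_iff, mem_univ, true_and, implies_true]
    tauto
  simp_rw [prod_congr rfl fun i _ => eq_ite_eq_one_of_eq_zero_or_one hx i, prod_boole, sum_boole,
    hfilter, card_powersetCard]

theorem pow_sum_le_of_eq_zero_or_one [PartialOrder R] [IsOrderedRing R]
    (hx : ∀ i, x i = 0 ∨ x i = 1) {k : ℕ} (hk : 0 < k) :
    (∑ i, x i) ^ k ≤ k ^ k * ∑ r ∈ Icc 1 k, ∑ A ∈ powersetCard r univ, ∏ i ∈ A, x i := by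
  simp_rw [sum_powersetCard_prod_of_eq_zero_or_one hx, sum_eq_card_of_eq_zero_or_one hx]
  simpa using Nat.mono_cast (α := R) (Nat.pow_le_pow_self_mul_sum_choose (m := #{i | x i = 1}) hk)

end ZeroOne

section Moments

variable {Ω ι : Type*} [MeasurableSpace Ω] {μ : Measure Ω} {X : ι → Ω → ℝ} {p : ℝ}

theorem ProbabilityTheory.iIndepFun.integral_finset_prod_eq_pow (hX : iIndepFun X μ)
    (hmeas : ∀ i, AEStronglyMeasurable (X i) μ) (hid : ∀ i, ∫ ω, X i ω ∂μ = p) (A : Finset ι) :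
    ∫ ω, ∏ i ∈ A, X i ω ∂μ = p ^ #A := by
  have hXA : iIndepFun (fun i : A => X i) μ := hX.precomp Subtype.val_injective
  calc ∫ ω, ∏ i ∈ A, X i ω ∂μ = ∫ ω, ∏ i : A, X i ω ∂μ := by
        simp_rw [fun ω => prod_coe_sort A fun i => X i ω]
    _ = ∏ i : A, ∫ ω, X i ω ∂μ := hXA.integral_fun_prod_eq_prod_integral fun i => hmeas i
    _ = p ^ #A := by simp [hid]

theorem integrable_finset_prod_of_eq_zero_or_one [IsFiniteMeasure μ]
    (hmeas : ∀ i, AEStronglyMeasurable (X i) μ) (hval : ∀ i ω, X i ω = 0 ∨ X i ω = 1)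
    (A : Finset ι) : Integrable (fun ω => ∏ i ∈ A, X i ω) μ := by
  refine .of_bound (Finset.aestronglyMeasurable_fun_prod A fun i _ => hmeas i) 1
    (.of_forall fun ω => ?_)
  rw [Real.norm_eq_abs, abs_prod]
  exact prod_le_one (fun _ _ => abs_nonneg _) fun i _ => by rcases hval i ω with h | h <;> simp [h]

variable [Fintype ι] [IsProbabilityMeasure μ]

theorem integral_sum_powersetCard_prod_eq (hX : iIndepFun X μ)
    (hmeas : ∀ i, AEStronglyMeasurable (X i) μ) (hval : ∀ i ω, X i ω = 0 ∨ X i ω = 1)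
    (hid : ∀ i, ∫ ω, X i ω ∂μ = p) (r : ℕ) :
    ∫ ω, ∑ A ∈ powersetCard r univ, ∏ i ∈ A, X i ω ∂μ = (Fintype.card ι).choose r * p ^ r := by
  rw [integral_finsetSum _ fun A _ => integrable_finset_prod_of_eq_zero_or_one hmeas hval A,
    sum_congr rfl fun A hA =>
      (mem_powersetCard.mp hA).2 ▸ hX.integral_finset_prod_eq_pow hmeas hid A,
    sum_const, card_powersetCard, card_univ, nsmul_eq_mul]

theorem integral_pow_sum_le_of_eq_zero_or_one (hX : iIndepFun X μ)
    (hmeas : ∀ i, AEStronglyMeasurable (X i) μ) (hval : ∀ i ω, X i ω = 0 ∨ X i ω = 1)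
    (hid : ∀ i, ∫ ω, X i ω ∂μ = p) {k : ℕ} (hk : 0 < k) :
    ∫ ω, (∑ i, X i ω) ^ k ∂μ ≤ k ^ k * ∑ r ∈ Icc 1 k, (Fintype.card ι).choose r * p ^ r := by
  have hint : ∀ r, Integrable (fun ω => ∑ A ∈ powersetCard r univ, ∏ i ∈ A, X i ω) μ :=
    fun r => integrable_finsetSum _ fun A _ =>
      integrable_finset_prod_of_eq_zero_or_one hmeas hval A
  calc ∫ ω, (∑ i, X i ω) ^ k ∂μ
      ≤ ∫ ω, k ^ k * ∑ r ∈ Icc 1 k, ∑ A ∈ powersetCard r univ, ∏ i ∈ A, X i ω ∂μ := by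
        refine integral_mono_of_nonneg (.of_forall fun ω => ?_)
          ((integrable_finsetSum _ fun r _ => hint r).const_mul _)
          (.of_forall fun ω => pow_sum_le_of_eq_zero_or_one (hval · ω) hk)
        exact pow_nonneg (sum_nonneg fun i _ => by rcases hval i ω with h | h <;> simp [h]) k
    _ = k ^ k * ∑ r ∈ Icc 1 k, (Fintype.card ι).choose r * p ^ r := by
        rw [integral_const_mul, integral_finsetSum _ fun r _ => hint r]
        simp_rw [integral_sum_powersetCard_prod_eq hX hmeas hval hid]

end Moments

theorem sum_Icc_choose_mul_pow_le {R : Type*} [CommSemiring R] [PartialOrder R] [IsOrderedRing R]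
    {N : ℕ} {p : R} (hp : 0 ≤ p) (hNp : N * p ≤ 1) (k : ℕ) :
    ∑ r ∈ Icc 1 k, N.choose r * p ^ r ≤ k * (N * p) := by
  calc ∑ r ∈ Icc 1 k, N.choose r * p ^ r ≤ #(Icc 1 k) • (N * p) := by
        refine sum_le_card_nsmul _ _ _ fun r hr => ?_
        have hchoose : (N.choose r : R) ≤ N ^ r := by
          simpa using Nat.mono_cast (α := R) (Nat.choose_le_pow N r)
        calc (N.choose r : R) * p ^ r ≤ N ^ r * p ^ r := by gcongr
          _ = (N * p) ^ r := (mul_pow _ _ _).symm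
          _ ≤ N * p :=
            pow_le_of_le_one (by positivity) hNp (Nat.one_le_iff_ne_zero.mp (mem_Icc.mp hr).1)
    _ = k * (N * p) := by simp [nsmul_eq_mul]

theorem binomial_pow_moment_le_general {Ω : Type*} [MeasurableSpace Ω]
    (μ : Measure Ω) [IsProbabilityMeasure μ]
    (n : ℕ) (α β : ℝ) (hα : 0 < α) (hβ : α ≤ β)
    (k : ℕ) (hk : 0 < k) (p : ℝ)
    (N : ℕ) (hN : N = ⌊Real.exp (n * α)⌋₊)
    (X : Fin N → Ω → ℝ) (hmeas : ∀ i, Measurable (X i))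
    (hval : ∀ i ω, X i ω = 0 ∨ X i ω = 1)
    (hindep : iIndepFun X μ)
    (hid : ∀ i, ∫ ω, X i ω ∂μ = p)
    (hmean : p ≤ Real.exp (-(n * β))) :
    ∫ ω, (∑ i, X i ω) ^ k ∂μ ≤
      ((Nat.factorial k : ℝ)) ^ 2 * (k : ℝ) * Real.exp (n * (α - β)) := by
  have hN0 : 0 < N := hN ▸ Nat.floor_pos.mpr (Real.one_le_exp (by positivity))
  have hp : 0 ≤ p := hid ⟨0, hN0⟩ ▸ integral_nonneg fun ω => by
    rcases hval ⟨0, hN0⟩ ω with h | h <;> simp [h]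
  have hNp : N * p ≤ Real.exp (n * (α - β)) := calc
    N * p ≤ Real.exp (n * α) * Real.exp (-(n * β)) :=
      mul_le_mul (hN ▸ Nat.floor_le (Real.exp_pos _).le) hmean hp (Real.exp_pos _).le
    _ = Real.exp (n * (α - β)) := by rw [← Real.exp_add]; ring_nf
  have hexp_le_one : Real.exp (n * (α - β)) ≤ 1 :=
    Real.exp_le_one_iff.mpr (mul_nonpos_of_nonneg_of_nonpos n.cast_nonneg (by linarith))
  calc ∫ ω, (∑ i, X i ω) ^ k ∂μ ≤ k ^ k * ∑ r ∈ Icc 1 k, N.choose r * p ^ r := by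
        simpa using integral_pow_sum_le_of_eq_zero_or_one hindep
          (fun i => (hmeas i).aestronglyMeasurable) hval hid hk
    _ ≤ k ^ k * (k * Real.exp (n * (α - β))) := by
        gcongr
        exact (sum_Icc_choose_mul_pow_le hp (hNp.trans hexp_le_one) k).trans (by gcongr)
    _ ≤ (k.factorial : ℝ) ^ 2 * (k * Real.exp (n * (α - β))) := by
        gcongr
        exact_mod_cast Nat.pow_self_le_factorial_sq k
    _ = _ := by ring

/-- IID {0,1}-valued variables `X 1, …, X N` with `E[X 1] ≤ e^{−nβ}`, `N = ⌊e^{nα}⌋`,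
`β ≥ α > 0`, `k ≥ 1` an integer: `E[(∑ X i)^k] ≤ (k!)² k e^{n(α−β)}`. -/
theorem binomial_pow_moment_le {Ω : Type*} [MeasurableSpace Ω]
    (μ : Measure Ω) [IsProbabilityMeasure μ]
    (n : ℕ) (hn : 0 < n) (α β : ℝ) (hα : 0 < α) (hβ : α ≤ β)
    (k : ℕ) (hk : 0 < k) (p : ℝ)
    (N : ℕ) (hN : N = ⌊Real.exp (n * α)⌋₊)
    (X : Fin N → Ω → ℝ) (hmeas : ∀ i, Measurable (X i))
    (hval : ∀ i ω, X i ω = 0 ∨ X i ω = 1)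
    (hindep : iIndepFun X μ)
    (hid : ∀ i, ∫ ω, X i ω ∂μ = p)
    (hmean : p ≤ Real.exp (-(n * β))) :
    ∫ ω, (∑ i, X i ω) ^ k ∂μ ≤
      ((Nat.factorial k : ℝ)) ^ 2 * (k : ℝ) * Real.exp (n * (α - β)) :=
  binomial_pow_moment_le_general μ n α β hα hβ k hk p N hN X hmeas hval hindep hid hmean
end

section
/- Let C be a compact subset of ℝ^n, I = [α, ∞), and f : I × C → ℝ be such that f(·, π) is nonincreasing and continuous for every π ∈ C and f(ρ, ·) is continuous for every ρ ∈ I. Then lim_{ρ→∞} max_{π∈C} f(ρ, π) = max_{π∈C} lim_{ρ→∞} f(ρ, π). In particular, the maximum on the right-hand side is attained. -/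
open Filter Topology

section

variable {ι X β : Type*} [SemilatticeSup ι] [Nonempty ι] [TopologicalSpace X]
  [CompleteLinearOrder β] {C : Set X} {g : ι → X → β}

/- Pick a maximiser `p i` of each `g i` on `C` and a cluster point `x₀ ∈ C` of `p` along
`atTop`. For `t > g i x₀`, upper semicontinuity puts some `p j` with `j ≥ i` where
`g i < t`, and antitonicity gives `⨆ x ∈ C, g j x = g j (p j) ≤ g i (p j) < t`. -/
theorem IsCompact.exists_iInf_iSup_le_iInf_of_antitone (hC : IsCompact C) (hne : C.Nonempty)
    (hg : ∀ i, UpperSemicontinuousOn (g i) C) (hanti : ∀ x ∈ C, Antitone (g · x)) :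
    ∃ x₀ ∈ C, ⨅ i, ⨆ x ∈ C, g i x ≤ ⨅ i, g i x₀ := by
  choose p hpC hpmax using fun i => (hg i).exists_isMaxOn hne hC
  have hiSup : ∀ i, ⨆ x ∈ C, g i x = g i (p i) := fun i =>
    le_antisymm (iSup₂_le fun x hx => hpmax i hx) (le_iSup₂ (f := fun x _ => g i x) (p i) (hpC i))
  obtain ⟨x₀, hx₀C, hx₀⟩ :=
    hC.exists_mapClusterPt (f := atTop) (u := p) (tendsto_principal.2 (.of_forall hpC))
  refine ⟨x₀, hx₀C, le_iInf fun i => le_of_forall_gt fun t ht => ?_⟩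
  have hnear : ∀ᶠ x in 𝓝 x₀, x ∈ C → g i x < t :=
    eventually_nhdsWithin_iff.1 (hg i x₀ hx₀C t ht)
  obtain ⟨j, hlt, hij⟩ := ((hx₀.frequently hnear).and_eventually (eventually_ge_atTop i)).exists
  calc ⨅ k, ⨆ x ∈ C, g k x ≤ ⨆ x ∈ C, g j x := iInf_le _ j
    _ = g j (p j) := hiSup j
    _ ≤ g i (p j) := hanti _ (hpC j) hij
    _ < t := hlt (hpC j)

theorem IsCompact.iInf_iSup_eq_iSup_iInf_of_antitone (hC : IsCompact C) (hne : C.Nonempty)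
    (hg : ∀ i, UpperSemicontinuousOn (g i) C) (hanti : ∀ x ∈ C, Antitone (g · x)) :
    ⨅ i, ⨆ x ∈ C, g i x = ⨆ x ∈ C, ⨅ i, g i x ∧
      ∃ x₀ ∈ C, ⨅ i, g i x₀ = ⨆ x ∈ C, ⨅ i, g i x := by
  obtain ⟨x₀, hx₀C, hx₀⟩ := hC.exists_iInf_iSup_le_iInf_of_antitone hne hg hanti
  have hle : ⨆ x ∈ C, ⨅ i, g i x ≤ ⨅ i, ⨆ x ∈ C, g i x :=
    iSup₂_le fun x hx => iInf_mono fun i => le_iSup₂ (f := fun x _ => g i x) x hx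
  have hx₀le : ⨅ i, g i x₀ ≤ ⨆ x ∈ C, ⨅ i, g i x :=
    le_iSup₂ (f := fun x _ => ⨅ i, g i x) x₀ hx₀C
  exact ⟨le_antisymm (hx₀.trans hx₀le) hle, x₀, hx₀C, le_antisymm hx₀le (hle.trans hx₀)⟩

end

theorem minimax_limit_max_eq_max_limit_general (n : ℕ) (C : Set (Fin n → ℝ)) (α : ℝ)
    (f : ℝ → (Fin n → ℝ) → ℝ)
    (hC : IsCompact C) (hne : C.Nonempty)
    (hmono : ∀ π ∈ C, ∀ ρ₁ ρ₂, α ≤ ρ₁ → ρ₁ ≤ ρ₂ → f ρ₂ π ≤ f ρ₁ π)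
    (hcont₂ : ∀ ρ, α ≤ ρ → ContinuousOn (fun π => f ρ π) C) :
    Tendsto (fun ρ : ℝ => ⨆ π ∈ C, ((f ρ π : ℝ) : EReal)) atTop
        (nhds (⨆ π ∈ C, ⨅ ρ : Set.Ici α, ((f (ρ : ℝ) π : ℝ) : EReal))) ∧
      ∃ π₀ ∈ C, (⨅ ρ : Set.Ici α, ((f (ρ : ℝ) π₀ : ℝ) : EReal)) =
        ⨆ π ∈ C, ⨅ ρ : Set.Ici α, ((f (ρ : ℝ) π : ℝ) : EReal) := by
  set g : Set.Ici α → (Fin n → ℝ) → EReal := fun ρ π => (f ρ π : EReal)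
  have hg : ∀ ρ, UpperSemicontinuousOn (g ρ) C := fun ρ =>
    (continuous_coe_real_ereal.comp_continuousOn (hcont₂ ρ ρ.2)).upperSemicontinuousOn
  have hanti : ∀ π ∈ C, Antitone (g · π) := fun π hπ ρ₁ ρ₂ h =>
    EReal.coe_le_coe (hmono π hπ ρ₁ ρ₂ ρ₁.2 h)
  obtain ⟨hlim, hmax⟩ := hC.iInf_iSup_eq_iSup_iInf_of_antitone hne hg hanti
  refine ⟨?_, hmax⟩
  rw [← tendsto_comp_val_Ici_atTop (a := α), ← hlim]
  exact tendsto_atTop_iInf fun ρ₁ ρ₂ h => iSup₂_mono fun π hπ => hanti π hπ h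

/-- Minimax lemma: for `C ⊆ ℝⁿ` compact (nonempty) and `f : [α,∞) × C → ℝ` nonincreasing
and continuous in the first argument and continuous in the second,
`lim_{ρ→∞} max_{π∈C} f(ρ,π) = max_{π∈C} lim_{ρ→∞} f(ρ,π)` (limits taken in `EReal`,
where by monotonicity `lim_{ρ→∞} f(ρ,π) = ⨅_{ρ≥α} f(ρ,π)`), and the maximum on the
right-hand side is attained. -/
theorem minimax_limit_max_eq_max_limit (n : ℕ) (C : Set (Fin n → ℝ)) (α : ℝ)
    (f : ℝ → (Fin n → ℝ) → ℝ)
    (hC : IsCompact C) (hne : C.Nonempty)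
    (hmono : ∀ π ∈ C, ∀ ρ₁ ρ₂, α ≤ ρ₁ → ρ₁ ≤ ρ₂ → f ρ₂ π ≤ f ρ₁ π)
    (hcont₁ : ∀ π ∈ C, ContinuousOn (fun ρ => f ρ π) (Set.Ici α))
    (hcont₂ : ∀ ρ, α ≤ ρ → ContinuousOn (fun π => f ρ π) C) :
    Tendsto (fun ρ : ℝ => ⨆ π ∈ C, ((f ρ π : ℝ) : EReal)) atTop
        (nhds (⨆ π ∈ C, ⨅ ρ : Set.Ici α, ((f (ρ : ℝ) π : ℝ) : EReal))) ∧
      ∃ π₀ ∈ C, (⨅ ρ : Set.Ici α, ((f (ρ : ℝ) π₀ : ℝ) : EReal)) =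
        ⨆ π ∈ C, ⨅ ρ : Set.Ici α, ((f (ρ : ℝ) π : ℝ) : EReal) :=
  minimax_limit_max_eq_max_limit_general n C α f hC hne hmono hcont₂
end

section
/- Let X, Y be finite sets, W a channel from X to Y, P a PMF on X, and ρ > 0. Define α(y) = (∑_x P(x) W(y|x)^{1/(1+ρ)})^ρ and E_0(ρ,P) = −log ∑_y (∑_x P(x) W(y|x)^{1/(1+ρ)})^{1+ρ}. Then for every PMF Q on X and every channel V from X to Y, K(QV) + ρ^{−1} D(Q‖P) − (H(V|Q) − ρ^{−1} D(V‖W|Q))/(1+ρ) ≥ E_0(ρ,P)/ρ, where K(Q̃) = −∑_y Q̃(y) log ∑_x P(x) W(y|x)^{1/(1+ρ)}, QV(y) = ∑_x Q(x) V(y|x), H(V|Q) = −∑_{x,y} Q(x)V(y|x) log V(y|x), and D(V‖W|Q) = ∑_{x,y} Q(x)V(y|x) log(V(y|x)/W(y|x)). Moreover the infimum over (Q, V) equals E_0(ρ,P)/ρ. -/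
open Finset

/-- Gallager's function `E₀(ρ,P) = −log ∑_y (∑_x P(x) W(y|x)^{1/(1+ρ)})^{1+ρ}`. -/
noncomputable def gallagerE0 {X Y : Type*} [Fintype X] [Fintype Y]
    (W : X → Y → ℝ) (ρ : ℝ) (P : X → ℝ) : ℝ :=
  -Real.log (∑ y, (∑ x, P x * (W x y) ^ (1 / (1 + ρ))) ^ (1 + ρ))

/-- The quantity `K(QV) + ρ⁻¹ D(Q‖P) − (H(V|Q) − ρ⁻¹ D(V‖W|Q))/(1+ρ)`, where
`K(Q̃) = −∑_y Q̃(y) log ∑_x P(x) W(y|x)^{1/(1+ρ)}`. -/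
noncomputable def cutoffExpr {X Y : Type*} [Fintype X] [Fintype Y]
    (W : X → Y → ℝ) (ρ : ℝ) (P : X → ℝ) (Q : X → ℝ) (V : X → Y → ℝ) : ℝ :=
  (-∑ y, (∑ x, Q x * V x y) * Real.log (∑ x, P x * (W x y) ^ (1 / (1 + ρ))))
    + ρ⁻¹ * ∑ x, Q x * Real.log (Q x / P x)
    - ((-∑ x, ∑ y, Q x * V x y * Real.log (V x y))
        - ρ⁻¹ * ∑ x, ∑ y, Q x * V x y * Real.log (V x y / W x y)) / (1 + ρ)

/-- Gibbs' inequality (log-sum form). -/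
lemma gibbs_aux {ι : Type*} [Fintype ι] (p s : ι → ℝ) (hp0 : ∀ i, 0 ≤ p i)
    (hp1 : ∑ i, p i = 1) (hs0 : ∀ i, 0 ≤ s i) (hps : ∀ i, 0 < p i → 0 < s i)
    (hZ : 0 < ∑ i, s i) :
    -Real.log (∑ i, s i) ≤ ∑ i, p i * Real.log (p i / s i) := by
  set Z := ∑ i, s i with hZdef
  have key : ∀ i, p i - s i / Z ≤ p i * Real.log (p i / s i) + p i * Real.log Z := by
    intro i
    rcases eq_or_lt_of_le (hp0 i) with h | h
    · rw [← h]
      simp only [zero_mul, add_zero, zero_sub, neg_nonpos]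
      exact div_nonneg (hs0 i) hZ.le
    · have hs := hps i h
      have hpos : 0 < s i / (p i * Z) := by positivity
      have h2 : Real.log (s i / (p i * Z)) ≤ s i / (p i * Z) - 1 :=
        Real.log_le_sub_one_of_pos hpos
      have h3 : Real.log (p i / s i) + Real.log Z = -Real.log (s i / (p i * Z)) := by
        rw [← Real.log_inv, ← Real.log_mul (by positivity) hZ.ne']
        congr 1
        field_simp
      rw [← mul_add, h3]
      have h4 : 1 - s i / (p i * Z) ≤ -Real.log (s i / (p i * Z)) := by linarith
      have h5 := mul_le_mul_of_nonneg_left h4 (hp0 i)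
      have h6 : p i * (1 - s i / (p i * Z)) = p i - s i / Z := by
        field_simp
      linarith
  have hsum := Finset.sum_le_sum (s := Finset.univ) (fun i _ => key i)
  have e1 : ∑ i, (p i - s i / Z) = 0 := by
    rw [Finset.sum_sub_distrib, hp1, ← Finset.sum_div, ← hZdef, div_self hZ.ne']
    ring
  have e2 : ∑ i, (p i * Real.log (p i / s i) + p i * Real.log Z)
      = (∑ i, p i * Real.log (p i / s i)) + Real.log Z := by
    rw [Finset.sum_add_distrib, ← Finset.sum_mul, hp1, one_mul]
  rw [e1, e2] at hsum
  linarith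

/-- Gibbs' inequality, double-sum version. -/
lemma gibbs_aux2 {X Y : Type*} [Fintype X] [Fintype Y] (p s : X → Y → ℝ)
    (hp0 : ∀ x y, 0 ≤ p x y) (hp1 : ∑ x, ∑ y, p x y = 1)
    (hs0 : ∀ x y, 0 ≤ s x y) (hps : ∀ x y, 0 < p x y → 0 < s x y)
    (hZ : 0 < ∑ x, ∑ y, s x y) :
    -Real.log (∑ x, ∑ y, s x y) ≤ ∑ x, ∑ y, p x y * Real.log (p x y / s x y) := by
  have := gibbs_aux (ι := X × Y) (fun i => p i.1 i.2) (fun i => s i.1 i.2)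
    (fun i => hp0 i.1 i.2) (by rw [Fintype.sum_prod_type]; exact hp1)
    (fun i => hs0 i.1 i.2) (fun i => hps i.1 i.2)
    (by rw [Fintype.sum_prod_type]; exact hZ)
  simpa [Fintype.sum_prod_type] using this

noncomputable def auxA {X Y : Type*} [Fintype X]
    (W : X → Y → ℝ) (ρ : ℝ) (P : X → ℝ) (y : Y) : ℝ :=
  ∑ x, P x * (W x y) ^ (1 / (1 + ρ))

noncomputable def auxS {X Y : Type*} [Fintype X]
    (W : X → Y → ℝ) (ρ : ℝ) (P : X → ℝ) (x : X) (y : Y) : ℝ :=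
  P x * (W x y) ^ (1 / (1 + ρ)) * (auxA W ρ P y) ^ ρ

lemma auxA_nonneg {X Y : Type*} [Fintype X] (W : X → Y → ℝ) (hW0 : ∀ x y, 0 ≤ W x y)
    (ρ : ℝ) (P : X → ℝ) (hP0 : ∀ x, 0 ≤ P x) (y : Y) : 0 ≤ auxA W ρ P y :=
  Finset.sum_nonneg fun x _ => mul_nonneg (hP0 x) (Real.rpow_nonneg (hW0 x y) _)

lemma auxS_nonneg {X Y : Type*} [Fintype X] (W : X → Y → ℝ) (hW0 : ∀ x y, 0 ≤ W x y)
    (ρ : ℝ) (P : X → ℝ) (hP0 : ∀ x, 0 ≤ P x) (x : X) (y : Y) : 0 ≤ auxS W ρ P x y :=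
  mul_nonneg (mul_nonneg (hP0 x) (Real.rpow_nonneg (hW0 x y) _))
    (Real.rpow_nonneg (auxA_nonneg W hW0 ρ P hP0 y) _)

lemma sum_auxS {X Y : Type*} [Fintype X] [Fintype Y] (W : X → Y → ℝ)
    (hW0 : ∀ x y, 0 ≤ W x y) (ρ : ℝ) (hρ : 0 < ρ) (P : X → ℝ) (hP0 : ∀ x, 0 ≤ P x) :
    ∑ x, ∑ y, auxS W ρ P x y = ∑ y, (auxA W ρ P y) ^ (1 + ρ) := by
  rw [Finset.sum_comm]
  refine Finset.sum_congr rfl fun y _ => ?_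
  have h1 : ∑ x, auxS W ρ P x y = (auxA W ρ P y) * (auxA W ρ P y) ^ ρ := by
    unfold auxS auxA
    rw [← Finset.sum_mul]
  rw [h1, Real.rpow_add' (auxA_nonneg W hW0 ρ P hP0 y) (by positivity), Real.rpow_one]

lemma sum_auxS_pos {X Y : Type*} [Fintype X] [Fintype Y] (W : X → Y → ℝ)
    (hW0 : ∀ x y, 0 ≤ W x y) (hW1 : ∀ x, ∑ y, W x y = 1)
    (ρ : ℝ) (hρ : 0 < ρ) (P : X → ℝ) (hP0 : ∀ x, 0 ≤ P x) (hP1 : ∑ x, P x = 1) :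
    0 < ∑ y, (auxA W ρ P y) ^ (1 + ρ) := by
  have h1ρ : (0:ℝ) < 1 + ρ := by linarith
  obtain ⟨x0, hx0⟩ : ∃ x, 0 < P x := by
    by_contra h
    push_neg at h
    have : ∑ x, P x = 0 := Finset.sum_eq_zero fun x _ => le_antisymm (h x) (hP0 x)
    rw [hP1] at this
    exact one_ne_zero this
  obtain ⟨y0, hy0⟩ : ∃ y, 0 < W x0 y := by
    by_contra h
    push_neg at h
    have : ∑ y, W x0 y = 0 := Finset.sum_eq_zero fun y _ => le_antisymm (h y) (hW0 x0 y)
    rw [hW1 x0] at this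
    exact one_ne_zero this
  have hApos : 0 < auxA W ρ P y0 :=
    Finset.sum_pos' (fun x _ => mul_nonneg (hP0 x) (Real.rpow_nonneg (hW0 x y0) _))
      ⟨x0, Finset.mem_univ x0, by positivity⟩
  refine Finset.sum_pos' (fun y _ => Real.rpow_nonneg (auxA_nonneg W hW0 ρ P hP0 y) _)
    ⟨y0, Finset.mem_univ y0, Real.rpow_pos_of_pos hApos _⟩

lemma cutoff_as_div {X Y : Type*} [Fintype X] [Fintype Y]
    (W : X → Y → ℝ) (hW0 : ∀ x y, 0 ≤ W x y)
    (P : X → ℝ) (hP0 : ∀ x, 0 ≤ P x)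
    (ρ : ℝ) (hρ : 0 < ρ)
    (Q : X → ℝ) (V : X → Y → ℝ) (hQ0 : ∀ x, 0 ≤ Q x)
    (hV0 : ∀ x y, 0 ≤ V x y) (hV1 : ∀ x, ∑ y, V x y = 1)
    (hPQ : ∀ x, P x = 0 → Q x = 0)
    (hWV : ∀ x y, 0 < Q x → W x y = 0 → V x y = 0) :
    cutoffExpr W ρ P Q V = ρ⁻¹ * ∑ x, ∑ y, Q x * V x y *
      Real.log (Q x * V x y / auxS W ρ P x y) := by
  unfold auxS auxA
  have h1ρ : (0:ℝ) < 1 + ρ := by linarith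
  unfold cutoffExpr
  have hT1 : (-∑ y, (∑ x, Q x * V x y) * Real.log (∑ x, P x * (W x y) ^ (1 / (1 + ρ))))
      = ∑ x, ∑ y, -(Q x * V x y * Real.log (∑ x', P x' * (W x' y) ^ (1 / (1 + ρ)))) := by
    simp only [Finset.sum_neg_distrib]
    rw [Finset.sum_comm]
    congr 1
    refine Finset.sum_congr rfl fun y _ => ?_
    rw [Finset.sum_mul]
  have hT2 : ρ⁻¹ * ∑ x, Q x * Real.log (Q x / P x)
      = ∑ x, ∑ y, ρ⁻¹ * (Q x * V x y * Real.log (Q x / P x)) := by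
    rw [Finset.mul_sum]
    refine Finset.sum_congr rfl fun x _ => ?_
    have : ∑ y, ρ⁻¹ * (Q x * V x y * Real.log (Q x / P x))
        = (ρ⁻¹ * (Q x * Real.log (Q x / P x))) * ∑ y, V x y := by
      rw [Finset.mul_sum]
      exact Finset.sum_congr rfl fun y _ => by ring
    rw [this, hV1, mul_one]
  have hT3 : ((-∑ x, ∑ y, Q x * V x y * Real.log (V x y))
        - ρ⁻¹ * ∑ x, ∑ y, Q x * V x y * Real.log (V x y / W x y)) / (1 + ρ)
      = ∑ x, ∑ y, (-(Q x * V x y * Real.log (V x y))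
          - ρ⁻¹ * (Q x * V x y * Real.log (V x y / W x y))) / (1 + ρ) := by
    simp only [← Finset.sum_neg_distrib, Finset.mul_sum, ← Finset.sum_sub_distrib,
      ← Finset.sum_div]
  rw [hT1, hT2, hT3]
  simp only [Finset.mul_sum]
  rw [← Finset.sum_add_distrib, ← Finset.sum_sub_distrib]
  refine Finset.sum_congr rfl fun x _ => ?_
  rw [← Finset.sum_add_distrib, ← Finset.sum_sub_distrib]
  refine Finset.sum_congr rfl fun y _ => ?_
  by_cases hc : Q x * V x y = 0
  · rw [hc]; simp
  · have hQ : 0 < Q x := by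
      rcases (hQ0 x).lt_or_eq with h | h
      · exact h
      · exact absurd (by rw [← h, zero_mul]) hc
    have hV : 0 < V x y := by
      rcases (hV0 x y).lt_or_eq with h | h
      · exact h
      · exact absurd (by rw [← h, mul_zero]) hc
    have hP : 0 < P x := by
      rcases (hP0 x).lt_or_eq with h | h
      · exact h
      · exact absurd (hPQ x h.symm) hQ.ne'
    have hW : 0 < W x y := by
      rcases (hW0 x y).lt_or_eq with h | h
      · exact h
      · exact absurd (hWV x y hQ h.symm) hV.ne'
    have hA : 0 < ∑ x', P x' * W x' y ^ (1 / (1 + ρ)) := by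
      refine Finset.sum_pos' (fun x' _ => mul_nonneg (hP0 x') (Real.rpow_nonneg (hW0 x' y) _))
        ⟨x, Finset.mem_univ x, by positivity⟩
    set A := ∑ x', P x' * W x' y ^ (1 / (1 + ρ)) with hAdef
    have l1 : Real.log (Q x / P x) = Real.log (Q x) - Real.log (P x) :=
      Real.log_div hQ.ne' hP.ne'
    have l2 : Real.log (V x y / W x y) = Real.log (V x y) - Real.log (W x y) :=
      Real.log_div hV.ne' hW.ne'
    have l3 : Real.log (Q x * V x y / (P x * W x y ^ (1 / (1 + ρ)) * A ^ ρ))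
        = Real.log (Q x) + Real.log (V x y)
          - (Real.log (P x) + (1 / (1 + ρ)) * Real.log (W x y) + ρ * Real.log A) := by
      rw [Real.log_div hc (by positivity), Real.log_mul hQ.ne' hV.ne',
        Real.log_mul (by positivity) (by positivity),
        Real.log_mul hP.ne' (by positivity),
        Real.log_rpow hW, Real.log_rpow hA]
    rw [l1, l2, l3]
    field_simp
    ring

/-- For every PMF `Q` on `X` and channel `V` (with `Q ≪ P` and `V(·|x) ≪ W(·|x)` on the
support of `Q`, the remaining cases giving `+∞` by convention),
`K(QV) + ρ⁻¹ D(Q‖P) − (H(V|Q) − ρ⁻¹ D(V‖W|Q))/(1+ρ) ≥ E₀(ρ,P)/ρ`,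
and the infimum over `(Q,V)` equals `E₀(ρ,P)/ρ` (it is attained). -/
theorem cutoffExpr_ge_E0_div_rho {X Y : Type*} [Fintype X] [Fintype Y]
    (W : X → Y → ℝ) (hW0 : ∀ x y, 0 ≤ W x y) (hW1 : ∀ x, ∑ y, W x y = 1)
    (P : X → ℝ) (hP0 : ∀ x, 0 ≤ P x) (hP1 : ∑ x, P x = 1)
    (ρ : ℝ) (hρ : 0 < ρ) :
    (∀ (Q : X → ℝ) (V : X → Y → ℝ), (∀ x, 0 ≤ Q x) → ∑ x, Q x = 1 →
      (∀ x y, 0 ≤ V x y) → (∀ x, ∑ y, V x y = 1) →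
      (∀ x, P x = 0 → Q x = 0) →
      (∀ x y, 0 < Q x → W x y = 0 → V x y = 0) →
      cutoffExpr W ρ P Q V ≥ gallagerE0 W ρ P / ρ) ∧
    (∃ (Q : X → ℝ) (V : X → Y → ℝ), (∀ x, 0 ≤ Q x) ∧ ∑ x, Q x = 1 ∧
      (∀ x y, 0 ≤ V x y) ∧ (∀ x, ∑ y, V x y = 1) ∧
      (∀ x, P x = 0 → Q x = 0) ∧
      (∀ x y, 0 < Q x → W x y = 0 → V x y = 0) ∧
      cutoffExpr W ρ P Q V = gallagerE0 W ρ P / ρ) := by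
  have h1ρ : (0:ℝ) < 1 + ρ := by linarith
  have hE0 : gallagerE0 W ρ P = -Real.log (∑ y, (auxA W ρ P y) ^ (1 + ρ)) := rfl
  have hZpos : 0 < ∑ y, (auxA W ρ P y) ^ (1 + ρ) :=
    sum_auxS_pos W hW0 hW1 ρ hρ P hP0 hP1
  have hZs : ∑ x, ∑ y, auxS W ρ P x y = ∑ y, (auxA W ρ P y) ^ (1 + ρ) :=
    sum_auxS W hW0 ρ hρ P hP0
  constructor
  · intro Q V hQ0 hQ1 hV0 hV1 hPQ hWV
    rw [ge_iff_le, cutoff_as_div W hW0 P hP0 ρ hρ Q V hQ0 hV0 hV1 hPQ hWV,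
      hE0, div_eq_inv_mul]
    refine mul_le_mul_of_nonneg_left ?_ (by positivity)
    rw [← hZs]
    refine gibbs_aux2 _ _ (fun x y => mul_nonneg (hQ0 x) (hV0 x y)) ?_
      (fun x y => auxS_nonneg W hW0 ρ P hP0 x y) ?_ (hZs ▸ hZpos)
    · simp only [← Finset.mul_sum]
      simp only [hV1, mul_one]
      exact hQ1
    · intro x y hc
      have hQ : 0 < Q x := by
        rcases (hQ0 x).lt_or_eq with h | h
        · exact h
        · exact absurd (by rw [← h, zero_mul]) hc.ne'
      have hV : 0 < V x y := by
        rcases (hV0 x y).lt_or_eq with h | h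
        · exact h
        · exact absurd (by rw [← h, mul_zero]) hc.ne'
      have hP : 0 < P x := by
        rcases (hP0 x).lt_or_eq with h | h
        · exact h
        · exact absurd (hPQ x h.symm) hQ.ne'
      have hW : 0 < W x y := by
        rcases (hW0 x y).lt_or_eq with h | h
        · exact h
        · exact absurd (hWV x y hQ h.symm) hV.ne'
      have hA : 0 < auxA W ρ P y :=
        Finset.sum_pos' (fun x' _ => mul_nonneg (hP0 x') (Real.rpow_nonneg (hW0 x' y) _))
          ⟨x, Finset.mem_univ x, by positivity⟩
      unfold auxS
      positivity
  · set Z := ∑ y, (auxA W ρ P y) ^ (1 + ρ) with hZdef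
    set B : X → ℝ := fun x => ∑ y, auxS W ρ P x y with hBdef
    have hB0 : ∀ x, 0 ≤ B x := fun x =>
      Finset.sum_nonneg fun y _ => auxS_nonneg W hW0 ρ P hP0 x y
    have hBsum : ∑ x, B x = Z := hZs
    refine ⟨fun x => B x / Z, fun x y => if B x = 0 then W x y else auxS W ρ P x y / B x,
      ?_, ?_, ?_, ?_, ?_, ?_, ?_⟩
    · exact fun x => div_nonneg (hB0 x) hZpos.le
    · rw [← Finset.sum_div, hBsum, div_self hZpos.ne']
    · intro x y
      dsimp only
      split
      · exact hW0 x y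
      · exact div_nonneg (auxS_nonneg W hW0 ρ P hP0 x y) (hB0 x)
    · intro x
      by_cases hB : B x = 0
      · simp only [if_pos hB]
        exact hW1 x
      · simp only [if_neg hB]
        rw [← Finset.sum_div]
        exact div_self hB
    · intro x hPx
      have : B x = 0 := by
        simp only [hBdef]
        refine Finset.sum_eq_zero fun y _ => ?_
        unfold auxS
        rw [hPx, zero_mul, zero_mul]
      show B x / Z = 0
      rw [this, zero_div]
    · intro x y hQx hWxy
      have hQx' : 0 < B x / Z := hQx
      have hBx : B x ≠ 0 := by
        intro h
        rw [h, zero_div] at hQx'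
        exact lt_irrefl 0 hQx'
      simp only [if_neg hBx]
      have : auxS W ρ P x y = 0 := by
        unfold auxS
        rw [hWxy, Real.zero_rpow (by positivity), mul_zero, zero_mul]
      rw [this, zero_div]
    · -- equality
      have hQ0' : ∀ x, 0 ≤ B x / Z := fun x => div_nonneg (hB0 x) hZpos.le
      have hV0' : ∀ x y, 0 ≤ (if B x = 0 then W x y else auxS W ρ P x y / B x) := by
        intro x y
        split
        · exact hW0 x y
        · exact div_nonneg (auxS_nonneg W hW0 ρ P hP0 x y) (hB0 x)
      have hV1' : ∀ x, ∑ y, (if B x = 0 then W x y else auxS W ρ P x y / B x) = 1 := by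
        intro x
        by_cases hB : B x = 0
        · simp only [if_pos hB]
          exact hW1 x
        · simp only [if_neg hB]
          rw [← Finset.sum_div]
          exact div_self hB
      have hPQ' : ∀ x, P x = 0 → B x / Z = 0 := by
        intro x hPx
        have : B x = 0 := by
          simp only [hBdef]
          refine Finset.sum_eq_zero fun y _ => ?_
          unfold auxS
          rw [hPx, zero_mul, zero_mul]
        rw [this, zero_div]
      have hWV' : ∀ x y, 0 < B x / Z → W x y = 0 →
          (if B x = 0 then W x y else auxS W ρ P x y / B x) = 0 := by
        intro x y hQx hWxy
        have hBx : B x ≠ 0 := by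
          intro h
          rw [h, zero_div] at hQx
          exact lt_irrefl 0 hQx
        simp only [if_neg hBx]
        have : auxS W ρ P x y = 0 := by
          unfold auxS
          rw [hWxy, Real.zero_rpow (by positivity), mul_zero, zero_mul]
        rw [this, zero_div]
      show cutoffExpr W ρ P _ _ = _
      rw [cutoff_as_div W hW0 P hP0 ρ hρ _ _ hQ0' hV0' hV1' hPQ' hWV', hE0, div_eq_inv_mul]
      congr 1
      have hterm : ∀ x y, (B x / Z) * (if B x = 0 then W x y else auxS W ρ P x y / B x)
          = auxS W ρ P x y / Z := by
        intro x y
        by_cases hB : B x = 0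
        · have hs0 : auxS W ρ P x y = 0 := by
            have := (Finset.sum_eq_zero_iff_of_nonneg
              (fun y _ => auxS_nonneg W hW0 ρ P hP0 x y)).mp hB
            exact this y (Finset.mem_univ y)
          simp [hB, hs0]
        · simp only [if_neg hB]
          field_simp
      have step : ∀ x y, (B x / Z) * (if B x = 0 then W x y else auxS W ρ P x y / B x) *
          Real.log ((B x / Z) * (if B x = 0 then W x y else auxS W ρ P x y / B x)
            / auxS W ρ P x y)
          = (auxS W ρ P x y / Z) * (-Real.log Z) := by
        intro x y
        rw [hterm x y]
        by_cases hs : auxS W ρ P x y = 0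
        · simp [hs]
        · have : auxS W ρ P x y / Z / auxS W ρ P x y = Z⁻¹ := by
            field_simp
          rw [this, Real.log_inv]
      calc ∑ x, ∑ y, (B x / Z) * (if B x = 0 then W x y else auxS W ρ P x y / B x) *
            Real.log ((B x / Z) * (if B x = 0 then W x y else auxS W ρ P x y / B x)
              / auxS W ρ P x y)
          = ∑ x, ∑ y, (auxS W ρ P x y / Z) * (-Real.log Z) :=
            Finset.sum_congr rfl fun x _ => Finset.sum_congr rfl fun y _ => step x y
        _ = ((∑ x, ∑ y, auxS W ρ P x y) / Z) * (-Real.log Z) := by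
            simp only [← Finset.sum_mul, ← Finset.sum_div]
        _ = -Real.log Z := by
            rw [show (∑ x, ∑ y, auxS W ρ P x y) = Z from hZs, div_self hZpos.ne', one_mul]
end

section
/- Let X, Y be finite sets, W a channel from X to Y, P a PMF on X, ρ > 0, and V, V' channels from X to Y with V ≪ W, V' ≪ W (i.e., V(y|x) = 0 whenever W(y|x) = 0) and PV = PV'. Then −ρ^{−1} log ∑_y PW(y) P(X(y))^ρ ≤ I(P,V) + ρ^{−1} D(V'‖W|P), where X(y) = {x : W(y|x) > 0}, I(P,V) = ∑_{x,y} P(x)V(y|x) log(V(y|x)/PV(y)), and D(V'‖W|P) = ∑_{x,y} P(x)V'(y|x) log(V'(y|x)/W(y|x)). -/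
open Finset

lemma log_sum_le {ι : Type*} [Fintype ι] (a b : ι → ℝ)
    (ha : ∀ i, 0 ≤ a i) (hb : ∀ i, 0 ≤ b i) (hab : ∀ i, b i = 0 → a i = 0) :
    (∑ i, a i) * Real.log ((∑ i, a i) / (∑ i, b i)) ≤ ∑ i, a i * Real.log (a i / b i) := by
  set A := ∑ i, a i with hA
  set B := ∑ i, b i with hB
  by_cases h0 : A = 0
  · have hz : ∀ i ∈ (univ : Finset ι), a i = 0 := by
      intro i _
      exact (Finset.sum_eq_zero_iff_of_nonneg (fun i _ => ha i)).1 h0 i (mem_univ i)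
    rw [h0, zero_mul]
    refine le_of_eq ?_
    refine (Finset.sum_eq_zero ?_).symm
    intro i _
    rw [hz i (mem_univ i), zero_mul]
  · have hApos : 0 < A := lt_of_le_of_ne (Finset.sum_nonneg fun i _ => ha i) (Ne.symm h0)
    obtain ⟨i0, -, hi0⟩ : ∃ i ∈ (univ : Finset ι), a i ≠ 0 := by
      by_contra h
      push_neg at h
      exact h0 (Finset.sum_eq_zero fun i hi => h i hi)
    have hbi0 : 0 < b i0 := lt_of_le_of_ne (hb i0) fun h => hi0 (hab i0 h.symm)
    have hBpos : 0 < B :=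
      lt_of_lt_of_le hbi0 (Finset.single_le_sum (fun i _ => hb i) (mem_univ i0))
    have key : ∀ i, a i * (Real.log (A / B) - Real.log (a i / b i)) ≤ A * b i / B - a i := by
      intro i
      by_cases hai : a i = 0
      · rw [hai]
        simp only [zero_mul, sub_zero]
        exact div_nonneg (mul_nonneg hApos.le (hb i)) hBpos.le
      · have haipos : 0 < a i := lt_of_le_of_ne (ha i) (Ne.symm hai)
        have hbipos : 0 < b i := lt_of_le_of_ne (hb i) fun h => hai (hab i h.symm)
        have hlog : Real.log (A / B) - Real.log (a i / b i)
            = Real.log (A * b i / (B * a i)) := by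
          rw [Real.log_div (ne_of_gt hApos) (ne_of_gt hBpos),
            Real.log_div (ne_of_gt haipos) (ne_of_gt hbipos),
            Real.log_div (mul_ne_zero (ne_of_gt hApos) (ne_of_gt hbipos))
              (mul_ne_zero (ne_of_gt hBpos) (ne_of_gt haipos)),
            Real.log_mul (ne_of_gt hApos) (ne_of_gt hbipos),
            Real.log_mul (ne_of_gt hBpos) (ne_of_gt haipos)]
          ring
        rw [hlog]
        have h1 : Real.log (A * b i / (B * a i)) ≤ A * b i / (B * a i) - 1 :=
          Real.log_le_sub_one_of_pos (by positivity)
        have h2 : a i * Real.log (A * b i / (B * a i)) ≤ a i * (A * b i / (B * a i) - 1) :=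
          mul_le_mul_of_nonneg_left h1 (le_of_lt haipos)
        have h3 : a i * (A * b i / (B * a i) - 1) = A * b i / B - a i := by
          field_simp
        linarith
    have hsum := Finset.sum_le_sum (s := (univ : Finset ι)) (fun i _ => key i)
    have hL : ∑ i, a i * (Real.log (A / B) - Real.log (a i / b i))
        = A * Real.log (A / B) - ∑ i, a i * Real.log (a i / b i) := by
      simp_rw [mul_sub]
      rw [Finset.sum_sub_distrib, ← Finset.sum_mul]
    have hR : ∑ i, (A * b i / B - a i) = 0 := by
      rw [Finset.sum_sub_distrib]
      have : ∑ i, A * b i / B = A := by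
        simp_rw [mul_div_assoc, ← Finset.mul_sum, ← Finset.sum_div]
        rw [← hB, div_self (ne_of_gt hBpos), mul_one]
      rw [this, ← hA, sub_self]
    rw [hL, hR] at hsum
    linarith

/-- Forney's lower bound never exceeds the constant-composition bound: for channels
`V, V' ≪ W` with `PV = PV'`,
`−ρ⁻¹ log ∑_y PW(y) P(X(y))^ρ ≤ I(P,V) + ρ⁻¹ D(V'‖W|P)`. -/
theorem forney_le_constant_composition {X Y : Type*} [Fintype X] [Fintype Y]
    (W : X → Y → ℝ) (hW0 : ∀ x y, 0 ≤ W x y) (hW1 : ∀ x, ∑ y, W x y = 1)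
    (P : X → ℝ) (hP0 : ∀ x, 0 ≤ P x) (hP1 : ∑ x, P x = 1)
    (ρ : ℝ) (hρ : 0 < ρ)
    (V V' : X → Y → ℝ)
    (hV0 : ∀ x y, 0 ≤ V x y) (hV1 : ∀ x, ∑ y, V x y = 1)
    (hV'0 : ∀ x y, 0 ≤ V' x y) (hV'1 : ∀ x, ∑ y, V' x y = 1)
    (hVW : ∀ x y, W x y = 0 → V x y = 0)
    (hV'W : ∀ x y, W x y = 0 → V' x y = 0)
    (hout : ∀ y, ∑ x, P x * V x y = ∑ x, P x * V' x y) :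
    -ρ⁻¹ * Real.log (∑ y, (∑ x, P x * W x y) *
        (∑ x ∈ univ.filter (fun x => 0 < W x y), P x) ^ ρ)
      ≤ (∑ x, ∑ y, P x * V x y * Real.log (V x y / ∑ x', P x' * V x' y))
        + ρ⁻¹ * ∑ x, ∑ y, P x * V' x y * Real.log (V' x y / W x y) := by
  classical
  set Q : Y → ℝ := fun y => ∑ x, P x * V x y with hQdef
  set PWy : Y → ℝ := fun y => ∑ x, P x * W x y with hPWdef
  set PXy : Y → ℝ := fun y => ∑ x ∈ univ.filter (fun x => 0 < W x y), P x with hPXdef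
  set R : Y → ℝ := fun y => PWy y * PXy y ^ ρ with hRdef
  have hQ0 : ∀ y, 0 ≤ Q y := fun y => Finset.sum_nonneg fun x _ => mul_nonneg (hP0 x) (hV0 x y)
  have hPW0 : ∀ y, 0 ≤ PWy y := fun y => Finset.sum_nonneg fun x _ => mul_nonneg (hP0 x) (hW0 x y)
  have hPX0 : ∀ y, 0 ≤ PXy y := fun y => Finset.sum_nonneg fun x _ => hP0 x
  have hQ1 : ∑ y, Q y = 1 := by
    rw [hQdef]
    rw [Finset.sum_comm]
    simp_rw [← Finset.mul_sum, hV1, mul_one]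
    exact hP1
  -- positivity facts when Q y ≠ 0
  have hpos : ∀ y, Q y ≠ 0 → 0 < PWy y ∧ 0 < PXy y := by
    intro y hQy
    obtain ⟨x, -, hx⟩ : ∃ x ∈ (univ : Finset X), P x * V x y ≠ 0 := by
      by_contra h
      push_neg at h
      exact hQy (Finset.sum_eq_zero fun x hx => h x hx)
    have hPx : 0 < P x := lt_of_le_of_ne (hP0 x) fun h => hx (by rw [← h, zero_mul])
    have hVx : 0 < V x y := lt_of_le_of_ne (hV0 x y) fun h => hx (by rw [← h, mul_zero])
    have hWx : 0 < W x y := lt_of_le_of_ne (hW0 x y) fun h => (ne_of_gt hVx) (hVW x y h.symm)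
    constructor
    · calc (0:ℝ) < P x * W x y := mul_pos hPx hWx
        _ ≤ PWy y := Finset.single_le_sum
            (fun x' _ => mul_nonneg (hP0 x') (hW0 x' y)) (mem_univ x)
    · calc (0:ℝ) < P x := hPx
        _ ≤ PXy y := Finset.single_le_sum (f := fun x => P x)
            (fun x' _ => hP0 x') (by simp [hWx])
  -- Step D : data processing for divergence
  have hD : ∑ y, Q y * Real.log (Q y / PWy y)
      ≤ ∑ x, ∑ y, P x * V' x y * Real.log (V' x y / W x y) := by
    rw [Finset.sum_comm]
    refine Finset.sum_le_sum fun y _ => ?_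
    have h := log_sum_le (fun x => P x * V' x y) (fun x => P x * W x y)
      (fun x => mul_nonneg (hP0 x) (hV'0 x y))
      (fun x => mul_nonneg (hP0 x) (hW0 x y))
      (fun x h => by
        show P x * V' x y = 0
        rcases mul_eq_zero.1 h with h | h
        · rw [h, zero_mul]
        · rw [hV'W x y h, mul_zero])
    have hQeq : ∑ x, P x * V' x y = Q y := (hout y).symm
    rw [hQeq] at h
    refine le_trans h (le_of_eq (Finset.sum_congr rfl fun x _ => ?_))
    by_cases hPx : P x = 0
    · simp [hPx]
    · rw [mul_div_mul_left _ _ hPx]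
  -- Step I : mutual information lower bound
  have hIlog : ∑ x, ∑ y, P x * V x y * Real.log (V x y / Q y)
      = ∑ y, ((∑ x, P x * V x y * Real.log (V x y)) - Q y * Real.log (Q y)) := by
    rw [Finset.sum_comm]
    refine Finset.sum_congr rfl fun y _ => ?_
    have : ∀ x, P x * V x y * Real.log (V x y / Q y)
        = P x * V x y * Real.log (V x y) - P x * V x y * Real.log (Q y) := by
      intro x
      by_cases h : P x * V x y = 0
      · rw [h]; ring
      · have hVx : V x y ≠ 0 := fun hv => h (by rw [hv, mul_zero])
        have hQy : Q y ≠ 0 := by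
          intro hq
          have h1 : P x * V x y ≤ Q y := Finset.single_le_sum
            (fun x' _ => mul_nonneg (hP0 x') (hV0 x' y)) (mem_univ x)
          have h2 : 0 < P x * V x y :=
            lt_of_le_of_ne (mul_nonneg (hP0 x) (hV0 x y)) (Ne.symm h)
          rw [hq] at h1; linarith
        rw [Real.log_div hVx hQy]; ring
    simp_rw [this]
    rw [Finset.sum_sub_distrib, ← Finset.sum_mul]
  have hIy : ∀ y, Q y * Real.log (Q y / PXy y) ≤ ∑ x, P x * V x y * Real.log (V x y) := by
    intro y
    have h := log_sum_le (fun x => P x * V x y)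
      (fun x => if 0 < W x y then P x else 0)
      (fun x => mul_nonneg (hP0 x) (hV0 x y))
      (fun x => by by_cases hw : 0 < W x y <;> simp [hw, hP0 x])
      (fun x h => by
        show P x * V x y = 0
        by_cases hw : 0 < W x y
        · have hp : P x = 0 := by simpa [hw] using h
          rw [hp, zero_mul]
        · rw [hVW x y (le_antisymm (not_lt.1 hw) (hW0 x y)), mul_zero])
    have hb : ∑ x, (if 0 < W x y then P x else 0) = PXy y := by
      show _ = ∑ x ∈ univ.filter (fun x => 0 < W x y), P x
      rw [Finset.sum_filter]
    rw [hb] at h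
    refine le_trans h (le_of_eq (Finset.sum_congr rfl fun x _ => ?_))
    by_cases hVx : V x y = 0
    · rw [hVx, mul_zero, zero_mul, zero_mul]
    · have hWx : 0 < W x y :=
        lt_of_le_of_ne (hW0 x y) fun h => hVx (hVW x y h.symm)
      rw [if_pos hWx]
      by_cases hPx : P x = 0
      · rw [hPx, zero_mul, zero_mul, zero_mul]
      · rw [mul_div_cancel_left₀ _ hPx]
  -- combine per y
  have hcomb : ∀ y, Q y * Real.log (Q y / R y)
      = ρ * (Q y * Real.log (Q y / PXy y) - Q y * Real.log (Q y))
        + Q y * Real.log (Q y / PWy y) := by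
    intro y
    by_cases hQy : Q y = 0
    · rw [hQy]; ring
    · obtain ⟨hPW, hPX⟩ := hpos y hQy
      have hRpos : 0 < R y := mul_pos hPW (Real.rpow_pos_of_pos hPX ρ)
      have hlogR : Real.log (R y) = Real.log (PWy y) + ρ * Real.log (PXy y) := by
        show Real.log (PWy y * PXy y ^ ρ) = _
        rw [Real.log_mul (ne_of_gt hPW) (ne_of_gt (Real.rpow_pos_of_pos hPX ρ)),
          Real.log_rpow hPX]
      rw [Real.log_div hQy (ne_of_gt hRpos), Real.log_div hQy (ne_of_gt hPX),
        Real.log_div hQy (ne_of_gt hPW), hlogR]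
      ring
  -- final log-sum over y
  have hfin : -Real.log (∑ y, R y) ≤ ∑ y, Q y * Real.log (Q y / R y) := by
    have hab : ∀ y, R y = 0 → Q y = 0 := by
      intro y hRy
      by_contra hQy
      obtain ⟨hPW, hPX⟩ := hpos y hQy
      exact absurd hRy (ne_of_gt (mul_pos hPW (Real.rpow_pos_of_pos hPX ρ)))
    have h := log_sum_le Q R hQ0
      (fun y => mul_nonneg (hPW0 y) (Real.rpow_nonneg (hPX0 y) ρ)) hab
    rw [hQ1, one_mul, one_div, Real.log_inv] at h
    exact h
  have hsumcomb : ∑ y, Q y * Real.log (Q y / R y)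
      = ρ * ((∑ y, Q y * Real.log (Q y / PXy y)) - ∑ y, Q y * Real.log (Q y))
        + ∑ y, Q y * Real.log (Q y / PWy y) := by
    rw [Finset.sum_congr rfl fun y _ => hcomb y, Finset.sum_add_distrib,
      ← Finset.mul_sum, Finset.sum_sub_distrib]
  have hIsum : (∑ y, Q y * Real.log (Q y / PXy y)) - ∑ y, Q y * Real.log (Q y)
      ≤ ∑ x, ∑ y, P x * V x y * Real.log (V x y / Q y) := by
    have h := Finset.sum_le_sum (s := (univ : Finset Y)) (fun y _ => hIy y)
    rw [hIlog, Finset.sum_sub_distrib]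
    linarith
  set I := ∑ x, ∑ y, P x * V x y * Real.log (V x y / Q y) with hI
  set D := ∑ x, ∑ y, P x * V' x y * Real.log (V' x y / W x y) with hDdef
  have hIsum' := mul_le_mul_of_nonneg_left hIsum hρ.le
  have key : -Real.log (∑ y, R y) ≤ ρ * I + D := by
    rw [hsumcomb] at hfin
    linarith
  have hgoal : -ρ⁻¹ * Real.log (∑ y, R y) ≤ I + ρ⁻¹ * D := by
    have h1 := mul_le_mul_of_nonneg_left key (inv_nonneg.2 hρ.le)
    have h2 : ρ⁻¹ * (ρ * I + D) = I + ρ⁻¹ * D := by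
      rw [mul_add, ← mul_assoc, inv_mul_cancel₀ hρ.ne', one_mul]
    rw [h2] at h1
    linarith
  exact hgoal
end

section
/- Let X, Y be finite sets, P a PMF on X, and V a channel from X to Y. Then ∑_{y : PV(y) > 0} PV(y) log(1 / P(supp V(·|y))) ≤ I(P,V), where supp V(·|y) = {x : V(y|x) > 0}, P(supp V(·|y)) = ∑_{x : V(y|x)>0} P(x), PV(y) = ∑_x P(x)V(y|x), and I(P,V) = ∑_{x,y : V(y|x)>0} P(x)V(y|x) log(V(y|x)/PV(y)). -/
/-!
For each output `y` the inequality is the log-sum inequality for the weights `P(x) V(y|x)`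
against `P(x) PV(y)` on `supp V(·|y)`: the weights have total mass `PV(y)`, the reference
weights total `P(supp V(·|y)) PV(y)`, and their ratio is `V(y|x) / PV(y)`. Summing over `y`
gives the claim.
-/

open Finset Real

theorem sum_mul_log_div_sum_le_sum_mul_log_div {ι : Type*} (s : Finset ι) (a b : ι → ℝ)
    (ha : ∀ i ∈ s, 0 ≤ a i) (hb : ∀ i ∈ s, 0 ≤ b i) (hab : ∀ i ∈ s, b i = 0 → a i = 0) :
    (∑ i ∈ s, a i) * log ((∑ i ∈ s, a i) / ∑ i ∈ s, b i) ≤ ∑ i ∈ s, a i * log (a i / b i) := by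
  set A := ∑ i ∈ s, a i
  set B := ∑ i ∈ s, b i
  rcases (show 0 ≤ A from sum_nonneg ha).eq_or_lt with hA | hA
  · have h0 := (sum_eq_zero_iff_of_nonneg ha).mp hA.symm
    rw [← hA, zero_mul, sum_eq_zero fun i hi => by rw [h0 i hi, zero_mul]]
  have hB : 0 < B := by
    refine (show 0 ≤ B from sum_nonneg hb).lt_of_ne fun hB => hA.ne' ?_
    have h0 := (sum_eq_zero_iff_of_nonneg hb).mp hB.symm
    exact sum_eq_zero fun i hi => hab i hi (h0 i hi)
  -- `log t ≥ 1 - t⁻¹` at `t = (a i / b i) / (A / B)`; the lower bounds sum to `A - B * (A / B) = 0`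
  have hterm : ∀ i ∈ s, a i - b i * (A / B) ≤ a i * log (a i / b i) - a i * log (A / B) := by
    intro i hi
    rcases (ha i hi).eq_or_lt with hai | hai
    · rw [← hai]
      simpa using mul_nonneg (hb i hi) (div_nonneg hA.le hB.le)
    have hbi : 0 < b i := (hb i hi).lt_of_ne fun h => hai.ne' (hab i hi h.symm)
    have hlog := one_sub_inv_le_log_of_pos (x := (a i / b i) / (A / B)) (by positivity)
    rw [← mul_sub, ← log_div (by positivity) (by positivity)]
    calc a i - b i * (A / B) = a i * (1 - ((a i / b i) / (A / B))⁻¹) := by field_simp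
      _ ≤ _ := mul_le_mul_of_nonneg_left hlog hai.le
  have hsum : ∑ i ∈ s, (a i - b i * (A / B)) = 0 := by
    rw [sum_sub_distrib, ← sum_mul]
    field_simp
    ring
  have := sum_le_sum hterm
  rw [hsum, sum_sub_distrib, ← sum_mul] at this
  linarith

theorem mul_log_inv_sum_support_le_sum_mul_log_div {X : Type*} [Fintype X] (P W : X → ℝ)
    (hP : ∀ x, 0 ≤ P x) (hW : ∀ x, 0 ≤ W x) :
    (∑ x, P x * W x) * log (1 / ∑ x ∈ univ.filter (fun x => 0 < W x), P x)
      ≤ ∑ x ∈ univ.filter (fun x => 0 < W x), P x * W x * log (W x / ∑ x', P x' * W x') := by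
  set A := ∑ x, P x * W x
  set S := univ.filter (fun x => 0 < W x)
  rcases eq_or_ne A 0 with hA | hA
  · simp [hA]
  have hA0 : 0 ≤ A := sum_nonneg fun x _ => mul_nonneg (hP x) (hW x)
  have hAS : ∑ x ∈ S, P x * W x = A :=
    sum_filter_of_ne fun x _ h => (hW x).lt_of_ne' (right_ne_zero_of_mul h)
  have hlogSum := sum_mul_log_div_sum_le_sum_mul_log_div S (fun x => P x * W x)
    (fun x => P x * A) (fun x _ => mul_nonneg (hP x) (hW x)) (fun x _ => mul_nonneg (hP x) hA0)
    (fun x _ h => by rw [(mul_eq_zero.mp h).resolve_right hA, zero_mul])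
  rw [hAS, ← sum_mul, div_mul_cancel_right₀ hA, ← one_div] at hlogSum
  refine hlogSum.trans_eq (sum_congr rfl fun x _ => ?_)
  rcases eq_or_ne (P x) 0 with hPx | hPx
  · simp [hPx]
  · rw [mul_div_mul_left _ _ hPx]

theorem sum_log_inv_support_le_mutualInfo_general {X Y : Type*} [Fintype X] [Fintype Y]
    (P : X → ℝ) (hP0 : ∀ x, 0 ≤ P x)
    (V : X → Y → ℝ) (hV0 : ∀ x y, 0 ≤ V x y) :
    ∑ y ∈ univ.filter (fun y => 0 < ∑ x, P x * V x y),
        (∑ x, P x * V x y) *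
          Real.log (1 / ∑ x ∈ univ.filter (fun x => 0 < V x y), P x)
      ≤ ∑ x, ∑ y ∈ univ.filter (fun y => 0 < V x y),
          P x * V x y * Real.log (V x y / ∑ x', P x' * V x' y) := by
  calc _ = ∑ y, (∑ x, P x * V x y) * log (1 / ∑ x ∈ univ.filter (fun x => 0 < V x y), P x) :=
        sum_filter_of_ne fun y _ h =>
          (sum_nonneg fun x _ => mul_nonneg (hP0 x) (hV0 x y)).lt_of_ne' (left_ne_zero_of_mul h)
    _ ≤ ∑ y, ∑ x ∈ univ.filter (fun x => 0 < V x y),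
          P x * V x y * log (V x y / ∑ x', P x' * V x' y) :=
        sum_le_sum fun y _ => mul_log_inv_sum_support_le_sum_mul_log_div P (V · y) hP0 (hV0 · y)
    _ = _ := sum_comm' (by simp)

/-- `∑_{y : PV(y)>0} PV(y) log(1 / P(supp V(·|y))) ≤ I(P,V)`, where
`supp V(·|y) = {x : V(y|x) > 0}` and
`I(P,V) = ∑_{x,y : V(y|x)>0} P(x)V(y|x) log(V(y|x)/PV(y))`. -/
theorem sum_log_inv_support_le_mutualInfo {X Y : Type*} [Fintype X] [Fintype Y]
    (P : X → ℝ) (hP0 : ∀ x, 0 ≤ P x) (hP1 : ∑ x, P x = 1)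
    (V : X → Y → ℝ) (hV0 : ∀ x y, 0 ≤ V x y) (hV1 : ∀ x, ∑ y, V x y = 1) :
    ∑ y ∈ univ.filter (fun y => 0 < ∑ x, P x * V x y),
        (∑ x, P x * V x y) *
          Real.log (1 / ∑ x ∈ univ.filter (fun x => 0 < V x y), P x)
      ≤ ∑ x, ∑ y ∈ univ.filter (fun y => 0 < V x y),
          P x * V x y * Real.log (V x y / ∑ x', P x' * V x' y) :=
  sum_log_inv_support_le_mutualInfo_general P hP0 V hV0
end

section
/- Let W be a channel from a finite set X to a finite set Y, and ρ > 0. Suppose P⋆ is a PMF on X minimizing ∑_y (∑_x P(x)W(y|x)^{1/(1+ρ)})^{1+ρ}, so that (by the KKT conditions) ∑_y W(y|x)^{1/(1+ρ)} α_y^ρ ≥ ∑_y α_y^{1+ρ} for all x, with equality whenever P⋆(x) > 0, where α_y = ∑_x P⋆(x) W(y|x)^{1/(1+ρ)}. Then for every n ≥ 1 and every n-tuple f = (f^{(1)},…,f^{(n)}) of functions f^{(i)} : Y^{i−1} → X, ∑_{y∈Y^n} (∏_{i=1}^n W(y_i | f^{(i)}(y^{i−1}))^{1/(1+ρ)}) ∏_{i=1}^n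 α_{y_i}^ρ ≥ (∑_y α_y^{1+ρ})^n. -/
open Finset

private lemma feedback_aux {X Y : Type*} [Fintype X] [Fintype Y]
    (W : X → Y → ℝ) (c ρ : ℝ) (α : Y → ℝ) (S : ℝ) (hS : 0 ≤ S)
    (hW : ∀ x y, 0 ≤ W x y ^ c) (hα : ∀ y, 0 ≤ α y ^ ρ)
    (hkey : ∀ x, S ≤ ∑ y, W x y ^ c * α y ^ ρ) :
    ∀ n (f : (i : Fin n) → ((Fin i → Y) → X)),
      S ^ n ≤ ∑ y : Fin n → Y,
        (∏ i, (W (f i (fun j : Fin i => y ⟨j.1, j.2.trans i.2⟩)) (y i)) ^ c)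
          * ∏ i, (α (y i)) ^ ρ := by
  intro n
  induction n with
  | zero => intro f; simp
  | succ n IH =>
    intro f
    set f' : (i : Fin n) → ((Fin i → Y) → X) := fun i g => f i.castSucc g with hf'
    set G : (Fin (n+1) → Y) → ℝ := fun y =>
      (∏ i, (W (f i (fun j : Fin i => y ⟨j.1, j.2.trans i.2⟩)) (y i)) ^ c)
        * ∏ i, (α (y i)) ^ ρ with hG
    have key : ∀ (p : Fin n → Y) (yl : Y),
        G (Fin.snoc p yl)
        = ((∏ i : Fin n, (W (f' i (fun j : Fin i => p ⟨j.1, j.2.trans i.2⟩)) (p i)) ^ c)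
            * ∏ i : Fin n, (α (p i)) ^ ρ)
          * ((W (f (Fin.last n) (fun j : Fin n => p j)) yl) ^ c * (α yl) ^ ρ) := by
      intro p yl
      set y : Fin (n+1) → Y := Fin.snoc p yl with hy
      have h2 : y (Fin.last n) = yl := by
        rw [hy]; exact @Fin.snoc_last n (fun _ => Y) yl p
      have h1 : ∀ i : Fin n, y i.castSucc = p i := by
        intro i; rw [hy]; exact @Fin.snoc_castSucc n (fun _ => Y) yl p i
      have h3 : ∀ i : Fin n,
          (fun j : Fin (i.castSucc : Fin (n+1)) => y ⟨j.1, j.2.trans i.castSucc.2⟩)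
            = (fun j : Fin i => p ⟨j.1, j.2.trans i.2⟩) := by
        intro i
        funext j
        rw [hy]
        exact @Fin.snoc_castSucc n (fun _ => Y) yl p ⟨j.1, j.2.trans i.2⟩
      have h4 : (fun j : Fin (Fin.last n : Fin (n+1)) => y ⟨j.1, j.2.trans (Fin.last n).2⟩)
          = (fun j : Fin n => p j) := by
        funext j
        rw [hy]
        exact @Fin.snoc_castSucc n (fun _ => Y) yl p j
      rw [hG]
      simp only []
      rw [Fin.prod_univ_castSucc
          (f := fun i : Fin (n+1) => (W (f i (fun j : Fin i =>
            y ⟨j.1, j.2.trans i.2⟩)) (y i)) ^ c),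
        Fin.prod_univ_castSucc (f := fun i : Fin (n+1) => (α (y i)) ^ ρ)]
      simp only [h1, h2, h3, h4, hf']
      ring
    have hAnn : ∀ p : Fin n → Y,
        0 ≤ (∏ i : Fin n, (W (f' i (fun j : Fin i => p ⟨j.1, j.2.trans i.2⟩)) (p i)) ^ c)
            * ∏ i : Fin n, (α (p i)) ^ ρ := fun p =>
      mul_nonneg (Finset.prod_nonneg fun i _ => hW _ _) (Finset.prod_nonneg fun i _ => hα _)
    have hsplit : (∑ y : Fin (n+1) → Y, G y)
        = ∑ p : Fin n → Y, ∑ yl : Y, G (Fin.snoc p yl) := by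
      rw [← Equiv.sum_comp (Fin.snocEquiv (fun _ : Fin (n+1) => Y)) G, Fintype.sum_prod_type]
      rw [Finset.sum_comm]
      rfl
    show S ^ (n+1) ≤ ∑ y : Fin (n+1) → Y, G y
    rw [hsplit]
    calc S ^ (n+1) = S ^ n * S := pow_succ S n
      _ ≤ (∑ p : Fin n → Y,
            (∏ i : Fin n, (W (f' i (fun j : Fin i => p ⟨j.1, j.2.trans i.2⟩)) (p i)) ^ c)
              * ∏ i : Fin n, (α (p i)) ^ ρ) * S :=
        mul_le_mul_of_nonneg_right (IH f') hS
      _ ≤ ∑ p : Fin n → Y,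
            ((∏ i : Fin n, (W (f' i (fun j : Fin i => p ⟨j.1, j.2.trans i.2⟩)) (p i)) ^ c)
              * ∏ i : Fin n, (α (p i)) ^ ρ)
            * ∑ yl : Y, (W (f (Fin.last n) (fun j : Fin n => p j)) yl) ^ c * (α yl) ^ ρ := by
          rw [Finset.sum_mul]
          exact Finset.sum_le_sum fun p _ =>
            mul_le_mul_of_nonneg_left (hkey _) (hAnn p)
      _ = _ := by
          refine Finset.sum_congr rfl fun p _ => ?_
          rw [Finset.mul_sum]
          exact Finset.sum_congr rfl fun yl _ => (key p yl).symm

/-- Key step showing feedback does not increase the cutoff rate.  Suppose `P⋆`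
minimizes `∑_y (∑_x P(x)W(y|x)^{1/(1+ρ)})^{1+ρ}` and (KKT conditions)
`∑_y W(y|x)^{1/(1+ρ)} α_y^ρ ≥ ∑_y α_y^{1+ρ}` for all `x`, with equality when
`P⋆(x) > 0`, where `α_y = ∑_x P⋆(x)W(y|x)^{1/(1+ρ)}`.  Then for every `n ≥ 1` and
every tuple of feedback strategies `f = (f⁽¹⁾,…,f⁽ⁿ⁾)`, `f⁽ⁱ⁾ : Yⁱ⁻¹ → X`,
`∑_{y∈Yⁿ} (∏ᵢ W(yᵢ|f⁽ⁱ⁾(yⁱ⁻¹))^{1/(1+ρ)}) ∏ᵢ α_{yᵢ}^ρ ≥ (∑_y α_y^{1+ρ})ⁿ`. -/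
theorem feedback_strategy_ge_E0 {X Y : Type*} [Fintype X] [Fintype Y]
    (W : X → Y → ℝ) (hW0 : ∀ x y, 0 ≤ W x y) (hW1 : ∀ x, ∑ y, W x y = 1)
    (ρ : ℝ) (hρ : 0 < ρ)
    (Pstar : X → ℝ) (hP0 : ∀ x, 0 ≤ Pstar x) (hP1 : ∑ x, Pstar x = 1)
    (hmin : ∀ P : X → ℝ, (∀ x, 0 ≤ P x) → ∑ x, P x = 1 →
      ∑ y, (∑ x, Pstar x * (W x y) ^ (1 / (1 + ρ))) ^ (1 + ρ)
        ≤ ∑ y, (∑ x, P x * (W x y) ^ (1 / (1 + ρ))) ^ (1 + ρ))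
    (hKKT : ∀ x,
      ∑ y, (W x y) ^ (1 / (1 + ρ)) * (∑ x', Pstar x' * (W x' y) ^ (1 / (1 + ρ))) ^ ρ
        ≥ ∑ y, (∑ x', Pstar x' * (W x' y) ^ (1 / (1 + ρ))) ^ (1 + ρ))
    (hKKTeq : ∀ x, 0 < Pstar x →
      ∑ y, (W x y) ^ (1 / (1 + ρ)) * (∑ x', Pstar x' * (W x' y) ^ (1 / (1 + ρ))) ^ ρ
        = ∑ y, (∑ x', Pstar x' * (W x' y) ^ (1 / (1 + ρ))) ^ (1 + ρ))
    (n : ℕ) (hn : 1 ≤ n)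
    (f : (i : Fin n) → ((Fin i → Y) → X)) :
    ∑ y : Fin n → Y,
        (∏ i, (W (f i (fun j : Fin i => y ⟨j.1, j.2.trans i.2⟩)) (y i)) ^ (1 / (1 + ρ)))
          * ∏ i, (∑ x', Pstar x' * (W x' (y i)) ^ (1 / (1 + ρ))) ^ ρ
      ≥ (∑ y, (∑ x', Pstar x' * (W x' y) ^ (1 / (1 + ρ))) ^ (1 + ρ)) ^ n := by
  have hα : ∀ y : Y, 0 ≤ ∑ x', Pstar x' * (W x' y) ^ (1 / (1 + ρ)) := fun y =>
    Finset.sum_nonneg fun x _ => mul_nonneg (hP0 x) (Real.rpow_nonneg (hW0 x y) _)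
  exact feedback_aux W (1 / (1 + ρ)) ρ
    (fun y => ∑ x', Pstar x' * (W x' y) ^ (1 / (1 + ρ)))
    (∑ y, (∑ x', Pstar x' * (W x' y) ^ (1 / (1 + ρ))) ^ (1 + ρ))
    (Finset.sum_nonneg fun y _ => Real.rpow_nonneg (hα y) _)
    (fun x y => Real.rpow_nonneg (hW0 x y) _)
    (fun y => Real.rpow_nonneg (hα y) _)
    (fun x => hKKT x) n f
end

section
/- Let X, Y be finite alphabets, W a channel, ρ > 0, and let P⋆ minimize ∑_y (∑_x P(x)W(y|x)^{1/(1+ρ)})^{1+ρ} over PMFs P on X. Let F be the set of n-tuples f = (f^{(1)},…,f^{(n)}) with f^{(i)} : Y^{i−1} → X, and define W̃_n(y|f) = ∏_{i=1}^n W(y_i | f^{(i)}(y^{i−1})). Then for every PMF P̃ on F, ∑_{y∈Y^n} (∑_{f∈F} P̃(f) W̃_n(y|f)^{1/(1+ρ)})^{1+ρ} ≥ e^{−n max_P E_0(ρ,P)}, where E_0(ρ,P) = −log ∑_y (∑_x P(x)W(y|x)^{1/(1+ρ)})^{1+ρ}. -/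
open Finset

lemma snoc_lt_apply {Y : Type*} {n : ℕ} (y' : Fin n → Y) (yn : Y) (k : ℕ)
    (h : k < n + 1) (h' : k < n) : (Fin.snoc y' yn : Fin (n+1) → Y) ⟨k, h⟩ = y' ⟨k, h'⟩ := by
  have : (⟨k, h⟩ : Fin (n+1)) = Fin.castSucc ⟨k, h'⟩ := rfl
  rw [this, Fin.snoc_castSucc]

lemma single_step {X Y : Type*} [Fintype X] [Fintype Y]
    (W : X → Y → ℝ) (hW0 : ∀ x y, 0 ≤ W x y) (ρ : ℝ) (hρ : 0 < ρ) (Gs : ℝ)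
    (hmin' : ∀ P : X → ℝ, (∀ x, 0 ≤ P x) → ∑ x, P x = 1 →
      Gs ≤ ∑ y, (∑ x, P x * (W x y) ^ (1 / (1 + ρ))) ^ (1 + ρ))
    (A : X → ℝ) (hA : ∀ x, 0 ≤ A x) :
    Gs * (∑ x, A x) ^ (1 + ρ) ≤ ∑ y, (∑ x, A x * (W x y) ^ (1 / (1 + ρ))) ^ (1 + ρ) := by
  have h1ρ : (0:ℝ) < 1 + ρ := by linarith
  set S := ∑ x, A x with hS
  have hS0 : 0 ≤ S := Finset.sum_nonneg fun x _ => hA x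
  rcases eq_or_lt_of_le hS0 with h | h
  · rw [← h, Real.zero_rpow h1ρ.ne', mul_zero]
    apply Finset.sum_nonneg
    intro y _
    exact Real.rpow_nonneg (Finset.sum_nonneg fun x _ => mul_nonneg (hA x) (Real.rpow_nonneg (hW0 x y) _)) _
  · have key := hmin' (fun x => A x / S) (fun x => div_nonneg (hA x) hS0) (by
      rw [← Finset.sum_div, ← hS, div_self h.ne'])
    have hrw : ∀ y : Y, (∑ x, A x / S * (W x y) ^ (1 / (1 + ρ))) ^ (1 + ρ)
        = (S⁻¹) ^ (1 + ρ) * (∑ x, A x * (W x y) ^ (1 / (1 + ρ))) ^ (1 + ρ) := by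
      intro y
      have : (∑ x, A x / S * (W x y) ^ (1 / (1 + ρ)))
          = S⁻¹ * (∑ x, A x * (W x y) ^ (1 / (1 + ρ))) := by
        rw [Finset.mul_sum]; congr 1; ext x; ring
      rw [this, Real.mul_rpow (inv_nonneg.2 hS0)
        (Finset.sum_nonneg fun x _ => mul_nonneg (hA x) (Real.rpow_nonneg (hW0 x y) _))]
    simp only [hrw, ← Finset.mul_sum] at key
    calc Gs * S ^ (1 + ρ) ≤ ((S:ℝ)⁻¹ ^ (1+ρ) * ∑ y, (∑ x, A x * (W x y) ^ (1 / (1 + ρ))) ^ (1 + ρ)) * S ^ (1+ρ) := by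
          apply mul_le_mul_of_nonneg_right key (Real.rpow_nonneg hS0 _)
      _ = (S⁻¹ ^ (1+ρ) * S ^ (1+ρ)) * ∑ y, (∑ x, A x * (W x y) ^ (1 / (1 + ρ))) ^ (1 + ρ) := by ring
      _ = ∑ y, (∑ x, A x * (W x y) ^ (1 / (1 + ρ))) ^ (1 + ρ) := by
          rw [← Real.mul_rpow (inv_nonneg.2 hS0) hS0, inv_mul_cancel₀ h.ne', Real.one_rpow, one_mul]

lemma main_ind {X Y : Type*} [Fintype X] [Fintype Y] [DecidableEq Y] [DecidableEq X]
    (W : X → Y → ℝ) (hW0 : ∀ x y, 0 ≤ W x y) (ρ : ℝ) (hρ : 0 < ρ) (Gs : ℝ) (hGs0 : 0 ≤ Gs)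
    (hmin' : ∀ P : X → ℝ, (∀ x, 0 ≤ P x) → ∑ x, P x = 1 →
      Gs ≤ ∑ y, (∑ x, P x * (W x y) ^ (1 / (1 + ρ))) ^ (1 + ρ)) :
    ∀ (n : ℕ) (Pt : ((i : Fin n) → ((Fin i → Y) → X)) → ℝ), (∀ f, 0 ≤ Pt f) →
      Gs ^ n * (∑ f, Pt f) ^ (1 + ρ) ≤
      ∑ y : Fin n → Y,
        (∑ f : (i : Fin n) → ((Fin i → Y) → X),
          Pt f * (∏ i, W (f i (fun j : Fin i => y ⟨j.1, j.2.trans i.2⟩)) (y i))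
              ^ (1 / (1 + ρ))) ^ (1 + ρ) := by
  intro n
  induction n with
  | zero =>
    intro Pt hPt0
    simp
  | succ n IH =>
    intro Pt hPt0
    set r := 1 / (1 + ρ) with hr
    set B : ((j : Fin n) → ((Fin j → Y) → X)) → (Fin n → Y) → ℝ :=
      fun g y' => ∏ j, W (g j (fun k : Fin j => y' ⟨k.1, k.2.trans j.2⟩)) (y' j) with hB
    have hB0 : ∀ g y', 0 ≤ B g y' :=
      fun g y' => Finset.prod_nonneg fun j _ => hW0 _ _
    set Q : ((j : Fin n) → ((Fin j → Y) → X)) → ℝ :=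
      fun g => ∑ h : (Fin n → Y) → X, Pt (Fin.snoc g h) with hQ
    have hQ0 : ∀ g, 0 ≤ Q g := fun g => Finset.sum_nonneg fun h _ => hPt0 _
    set A : (Fin n → Y) → X → ℝ := fun y' x =>
      ∑ p : ((Fin n → Y) → X) × ((j : Fin n) → ((Fin j → Y) → X)),
        if p.1 y' = x then Pt (Fin.snoc p.2 p.1) * (B p.2 y') ^ r else 0 with hA
    have hA0 : ∀ y' x, 0 ≤ A y' x := by
      intro y' x
      apply Finset.sum_nonneg
      intro p _
      split
      · exact mul_nonneg (hPt0 _) (Real.rpow_nonneg (hB0 _ _) _)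
      · exact le_refl 0
    have hsum_y : ∀ (F : (Fin (n+1) → Y) → ℝ),
        ∑ y, F y = ∑ y' : Fin n → Y, ∑ yn : Y, F (Fin.snoc y' yn) := by
      intro F
      rw [← Equiv.sum_comp (Fin.snocEquiv (fun _ : Fin (n+1) => Y)) F,
        Fintype.sum_prod_type, Finset.sum_comm]
      rfl
    have hsum_f : ∀ (F : ((i : Fin (n+1)) → ((Fin i → Y) → X)) → ℝ),
        ∑ f, F f = ∑ h : (Fin n → Y) → X,
          ∑ g : (j : Fin n) → ((Fin j → Y) → X), F (Fin.snoc g h) := by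
      intro F
      rw [← Equiv.sum_comp (Fin.snocEquiv (fun i : Fin (n+1) => (Fin i → Y) → X)) F,
        Fintype.sum_prod_type]
      rfl
    have hprod : ∀ (y' : Fin n → Y) (yn : Y) (g : (j : Fin n) → ((Fin j → Y) → X))
        (h : (Fin n → Y) → X),
        (∏ i : Fin (n+1),
          W ((Fin.snoc g h : (i : Fin (n+1)) → ((Fin i → Y) → X)) i
              (fun j : Fin i => (Fin.snoc y' yn : Fin (n+1) → Y) ⟨j.1, j.2.trans i.2⟩))
            ((Fin.snoc y' yn : Fin (n+1) → Y) i))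
        = B g y' * W (h y') yn := by
      intro y' yn g h
      rw [Fin.prod_univ_castSucc]
      congr 1
      · apply Finset.prod_congr rfl
        intro j _
        rw [Fin.snoc_castSucc, Fin.snoc_castSucc]
        have : (fun k : Fin (j.castSucc : Fin (n+1)) =>
            (Fin.snoc y' yn : Fin (n+1) → Y) ⟨k.1, k.2.trans j.castSucc.2⟩)
            = (fun k : Fin j => y' ⟨k.1, k.2.trans j.2⟩) := by
          funext k
          exact snoc_lt_apply y' yn k.1 _ (k.2.trans j.2)
        rw [this]
      · rw [Fin.snoc_last, Fin.snoc_last]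
        have : (fun k : Fin ((Fin.last n : Fin (n+1)) : ℕ) =>
            (Fin.snoc y' yn : Fin (n+1) → Y) ⟨k.1, k.2.trans (Fin.last n).2⟩)
            = y' := by
          funext k
          exact snoc_lt_apply y' yn k.1 _ k.2
        rw [this]
    have hinner : ∀ (y' : Fin n → Y) (yn : Y),
        (∑ f : (i : Fin (n+1)) → ((Fin i → Y) → X),
          Pt f * (∏ i : Fin (n+1),
            W (f i (fun j : Fin i => (Fin.snoc y' yn : Fin (n+1) → Y) ⟨j.1, j.2.trans i.2⟩))
              ((Fin.snoc y' yn : Fin (n+1) → Y) i)) ^ r)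
        = ∑ x, A y' x * W x yn ^ r := by
      intro y' yn
      rw [hsum_f (fun f => Pt f * (∏ i : Fin (n+1),
        W (f i (fun j : Fin i => (Fin.snoc y' yn : Fin (n+1) → Y) ⟨j.1, j.2.trans i.2⟩))
          ((Fin.snoc y' yn : Fin (n+1) → Y) i)) ^ r)]
      simp only [hprod]
      symm
      calc ∑ x, A y' x * W x yn ^ r
          = ∑ x, ∑ p : ((Fin n → Y) → X) × ((j : Fin n) → ((Fin j → Y) → X)),
              (if p.1 y' = x then Pt (Fin.snoc p.2 p.1) * (B p.2 y') ^ r * W x yn ^ r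
               else 0) := by
            simp only [hA, Finset.sum_mul, ite_mul, zero_mul]
        _ = ∑ p : ((Fin n → Y) → X) × ((j : Fin n) → ((Fin j → Y) → X)),
              ∑ x, (if p.1 y' = x then Pt (Fin.snoc p.2 p.1) * (B p.2 y') ^ r * W x yn ^ r
               else 0) := Finset.sum_comm
        _ = ∑ p : ((Fin n → Y) → X) × ((j : Fin n) → ((Fin j → Y) → X)),
              Pt (Fin.snoc p.2 p.1) * (B p.2 y') ^ r * W (p.1 y') yn ^ r := by
            simp [Finset.sum_ite_eq]
        _ = ∑ h : (Fin n → Y) → X, ∑ g : (j : Fin n) → ((Fin j → Y) → X),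
              Pt (Fin.snoc g h) * (B g y') ^ r * W (h y') yn ^ r := Fintype.sum_prod_type (fun p : ((Fin n → Y) → X) × ((j : Fin n) → ((Fin j → Y) → X)) => Pt (Fin.snoc p.2 p.1) * (B p.2 y') ^ r * W (p.1 y') yn ^ r)
        _ = ∑ h : (Fin n → Y) → X, ∑ g : (j : Fin n) → ((Fin j → Y) → X),
              Pt (Fin.snoc g h) * (B g y' * W (h y') yn) ^ r := by
            apply Finset.sum_congr rfl; intro h _
            apply Finset.sum_congr rfl; intro g _
            rw [Real.mul_rpow (hB0 _ _) (hW0 _ _)]; ring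
    have hAsum : ∀ y' : Fin n → Y, ∑ x, A y' x = ∑ g, Q g * (B g y') ^ r := by
      intro y'
      calc ∑ x, A y' x
          = ∑ p : ((Fin n → Y) → X) × ((j : Fin n) → ((Fin j → Y) → X)),
              ∑ x, (if p.1 y' = x then Pt (Fin.snoc p.2 p.1) * (B p.2 y') ^ r else 0) := by
            rw [Finset.sum_comm]
        _ = ∑ p : ((Fin n → Y) → X) × ((j : Fin n) → ((Fin j → Y) → X)),
              Pt (Fin.snoc p.2 p.1) * (B p.2 y') ^ r := by simp [Finset.sum_ite_eq]
        _ = ∑ h : (Fin n → Y) → X, ∑ g : (j : Fin n) → ((Fin j → Y) → X),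
              Pt (Fin.snoc g h) * (B g y') ^ r := Fintype.sum_prod_type (fun p : ((Fin n → Y) → X) × ((j : Fin n) → ((Fin j → Y) → X)) => Pt (Fin.snoc p.2 p.1) * (B p.2 y') ^ r)
        _ = ∑ g : (j : Fin n) → ((Fin j → Y) → X), ∑ h : (Fin n → Y) → X,
              Pt (Fin.snoc g h) * (B g y') ^ r := Finset.sum_comm
        _ = ∑ g, Q g * (B g y') ^ r := by
            apply Finset.sum_congr rfl; intro g _
            rw [hQ, ← Finset.sum_mul]
    have hQsum : ∑ g, Q g = ∑ f, Pt f := by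
      rw [hsum_f Pt, Finset.sum_comm]
    calc Gs ^ (n+1) * (∑ f, Pt f) ^ (1 + ρ)
        = Gs * (Gs ^ n * (∑ g, Q g) ^ (1 + ρ)) := by rw [hQsum, pow_succ]; ring
      _ ≤ Gs * ∑ y' : Fin n → Y, (∑ g, Q g * (B g y') ^ r) ^ (1 + ρ) :=
          mul_le_mul_of_nonneg_left (IH Q hQ0) hGs0
      _ = ∑ y' : Fin n → Y, Gs * (∑ x, A y' x) ^ (1 + ρ) := by
          rw [Finset.mul_sum]
          apply Finset.sum_congr rfl; intro y' _
          rw [hAsum]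
      _ ≤ ∑ y' : Fin n → Y, ∑ yn : Y, (∑ x, A y' x * W x yn ^ r) ^ (1 + ρ) :=
          Finset.sum_le_sum fun y' _ =>
            single_step W hW0 ρ hρ Gs hmin' (A y') (hA0 y')
      _ = ∑ y' : Fin n → Y, ∑ yn : Y,
            (∑ f : (i : Fin (n+1)) → ((Fin i → Y) → X),
              Pt f * (∏ i : Fin (n+1),
                W (f i (fun j : Fin i => (Fin.snoc y' yn : Fin (n+1) → Y) ⟨j.1, j.2.trans i.2⟩))
                  ((Fin.snoc y' yn : Fin (n+1) → Y) i)) ^ r) ^ (1 + ρ) := by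
          apply Finset.sum_congr rfl; intro y' _
          apply Finset.sum_congr rfl; intro yn _
          rw [hinner y' yn]
      _ = ∑ y : Fin (n+1) → Y,
            (∑ f : (i : Fin (n+1)) → ((Fin i → Y) → X),
              Pt f * (∏ i, W (f i (fun j : Fin i => y ⟨j.1, j.2.trans i.2⟩)) (y i)) ^ r)
              ^ (1 + ρ) := by
          rw [hsum_y (fun y => (∑ f : (i : Fin (n+1)) → ((Fin i → Y) → X),
            Pt f * (∏ i, W (f i (fun j : Fin i => y ⟨j.1, j.2.trans i.2⟩)) (y i)) ^ r)
              ^ (1 + ρ))]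


lemma Gpos {X Y : Type*} [Fintype X] [Fintype Y]
    (W : X → Y → ℝ) (hW0 : ∀ x y, 0 ≤ W x y) (hW1 : ∀ x, ∑ y, W x y = 1)
    (ρ : ℝ) (hρ : 0 < ρ)
    (P : X → ℝ) (hP0 : ∀ x, 0 ≤ P x) (hP1 : ∑ x, P x = 1) :
    0 < ∑ y, (∑ x, P x * (W x y) ^ (1 / (1 + ρ))) ^ (1 + ρ) := by
  obtain ⟨x0, hx0⟩ : ∃ x, P x ≠ 0 := by
    by_contra h
    push_neg at h
    rw [Finset.sum_eq_zero (fun x _ => h x)] at hP1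
    norm_num at hP1
  have hx0' : 0 < P x0 := lt_of_le_of_ne (hP0 x0) (Ne.symm hx0)
  obtain ⟨y0, hy0⟩ : ∃ y, W x0 y ≠ 0 := by
    by_contra h
    push_neg at h
    have := hW1 x0
    rw [Finset.sum_eq_zero (fun y _ => h y)] at this
    norm_num at this
  have hy0' : 0 < W x0 y0 := lt_of_le_of_ne (hW0 x0 y0) (Ne.symm hy0)
  have hinner : 0 < ∑ x, P x * (W x y0) ^ (1 / (1 + ρ)) := by
    have h1 : 0 < P x0 * (W x0 y0) ^ (1 / (1 + ρ)) :=
      mul_pos hx0' (Real.rpow_pos_of_pos hy0' _)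
    refine lt_of_lt_of_le h1 ?_
    exact Finset.single_le_sum
      (fun x _ => mul_nonneg (hP0 x) (Real.rpow_nonneg (hW0 x y0) _)) (Finset.mem_univ x0)
  refine lt_of_lt_of_le (Real.rpow_pos_of_pos hinner (1 + ρ)) ?_
  exact Finset.single_le_sum
    (fun y _ => Real.rpow_nonneg
      (Finset.sum_nonneg fun x _ => mul_nonneg (hP0 x) (Real.rpow_nonneg (hW0 x y) _)) _)
    (Finset.mem_univ y0)

/-- Inequality (25) of the paper.  Let `P⋆` minimize
`∑_y (∑_x P(x)W(y|x)^{1/(1+ρ)})^{1+ρ}` over PMFs on `X`.  Let `F` be the set of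
feedback strategies `f = (f⁽¹⁾,…,f⁽ⁿ⁾)`, `f⁽ⁱ⁾ : Yⁱ⁻¹ → X`, and
`W̃ₙ(y|f) = ∏ᵢ W(yᵢ|f⁽ⁱ⁾(yⁱ⁻¹))`.  Then for every PMF `P̃` on `F`,
`∑_{y∈Yⁿ} (∑_f P̃(f) W̃ₙ(y|f)^{1/(1+ρ)})^{1+ρ} ≥ e^{−n maxₚ E₀(ρ,P)}`, where
`E₀(ρ,P) = −log ∑_y (∑_x P(x)W(y|x)^{1/(1+ρ)})^{1+ρ}`. -/
theorem feedback_superchannel_ge_exp_neg_maxE0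
    {X Y : Type*} [Fintype X] [Fintype Y] [Nonempty X] [DecidableEq Y]
    (W : X → Y → ℝ) (hW0 : ∀ x y, 0 ≤ W x y) (hW1 : ∀ x, ∑ y, W x y = 1)
    (ρ : ℝ) (hρ : 0 < ρ)
    (Pstar : X → ℝ) (hP0 : ∀ x, 0 ≤ Pstar x) (hP1 : ∑ x, Pstar x = 1)
    (hmin : ∀ P : X → ℝ, (∀ x, 0 ≤ P x) → ∑ x, P x = 1 →
      ∑ y, (∑ x, Pstar x * (W x y) ^ (1 / (1 + ρ))) ^ (1 + ρ)
        ≤ ∑ y, (∑ x, P x * (W x y) ^ (1 / (1 + ρ))) ^ (1 + ρ))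
    (n : ℕ) (hn : 1 ≤ n)
    (Pt : ((i : Fin n) → ((Fin i → Y) → X)) → ℝ)
    (hPt0 : ∀ f, 0 ≤ Pt f) (hPt1 : ∑ f, Pt f = 1) :
    ∑ y : Fin n → Y,
        (∑ f : (i : Fin n) → ((Fin i → Y) → X),
          Pt f * (∏ i, W (f i (fun j : Fin i => y ⟨j.1, j.2.trans i.2⟩)) (y i))
              ^ (1 / (1 + ρ))) ^ (1 + ρ)
      ≥ Real.exp (-(n : ℝ) * sSup {e : ℝ | ∃ P : X → ℝ, (∀ x, 0 ≤ P x) ∧ ∑ x, P x = 1 ∧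
          e = -Real.log (∑ y, (∑ x, P x * (W x y) ^ (1 / (1 + ρ))) ^ (1 + ρ))}) := by
  classical
  set Gs := ∑ y, (∑ x, Pstar x * (W x y) ^ (1 / (1 + ρ))) ^ (1 + ρ) with hGsdef
  have hGs : 0 < Gs := Gpos W hW0 hW1 ρ hρ Pstar hP0 hP1
  have hsup : sSup {e : ℝ | ∃ P : X → ℝ, (∀ x, 0 ≤ P x) ∧ ∑ x, P x = 1 ∧
      e = -Real.log (∑ y, (∑ x, P x * (W x y) ^ (1 / (1 + ρ))) ^ (1 + ρ))}
      = -Real.log Gs := by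
    apply IsGreatest.csSup_eq
    constructor
    · exact ⟨Pstar, hP0, hP1, rfl⟩
    · rintro e ⟨P, h0, h1, rfl⟩
      have hle := hmin P h0 h1
      have : Real.log Gs ≤ Real.log (∑ y, (∑ x, P x * (W x y) ^ (1 / (1 + ρ))) ^ (1 + ρ)) :=
        Real.log_le_log hGs hle
      linarith
  rw [hsup]
  have hexp : Real.exp (-(n : ℝ) * -Real.log Gs) = Gs ^ n := by
    rw [neg_mul_neg, Real.exp_nat_mul, Real.exp_log hGs]
  rw [ge_iff_le, hexp]
  have key := main_ind W hW0 ρ hρ Gs (le_of_lt hGs)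
    (fun P h0 h1 => hmin P h0 h1) n Pt hPt0
  rwa [hPt1, Real.one_rpow, mul_one] at key
end

section
/- Let X, Y be finite sets, W : X → Y → ℝ≥0 a channel, and ρ > 0. Define E_0(ρ,P) = −log ∑_y (∑_x P(x)W(y|x)^{1/(1+ρ)})^{1+ρ}. Then lim_{ρ→∞} max_P E_0(ρ,P)/ρ = −log π_0, where π_0 = min_P max_{y∈Y} P(X(y)), X(y) = {x : W(y|x) > 0}, and both extrema are over PMFs P on X. -/
/-!
On `X(y)` we have `c^{1/(1+ρ)} ≤ W(y|x)^{1/(1+ρ)} ≤ 1`, where `c` is the least positive entry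
of `W`, and off `X(y)` the term vanishes. Hence, with `m(P) = max_y P(X(y))`, the sum
`Z(ρ, P) = exp (-E₀(ρ, P))` satisfies `c · m(P)^{1+ρ} ≤ Z(ρ, P) ≤ |Y| · m(P)^{1+ρ}`.
The lower bound with `m(P) ≥ π₀`, together with the upper bound at a minimiser `P₀` of `m`
(which exists as `m` is lower semicontinuous on the compact simplex), traps `max_P E₀(ρ, P)/ρ`
between `(-log |Y| - (1+ρ) log π₀)/ρ` and `(-log c - (1+ρ) log π₀)/ρ`; both tend to `-log π₀`.
-/

open Finset Filter

open Real Set Topology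

theorem Finite.exists_pos_le_of_pos {α : Type*} [Finite α] (f : α → ℝ) :
    ∃ c > 0, ∀ a, 0 < f a → c ≤ f a := by
  cases isEmpty_or_nonempty α
  · exact ⟨1, one_pos, fun a => isEmptyElim a⟩
  obtain ⟨a₀, ha₀⟩ := Finite.exists_min (fun a => if 0 < f a then f a else 1)
  refine ⟨if 0 < f a₀ then f a₀ else 1, by split_ifs <;> simp_all, fun a ha => ?_⟩
  simpa [ha] using ha₀ a

theorem tendsto_sub_one_add_mul_div_atTop (a b : ℝ) :
    Tendsto (fun ρ : ℝ => (a - (1 + ρ) * b) / ρ) atTop (𝓝 (-b)) := by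
  have h : Tendsto (fun ρ : ℝ => (a - b) / ρ + -b) atTop (𝓝 (0 + -b)) :=
    (tendsto_const_nhds.div_atTop tendsto_id).add tendsto_const_nhds
  rw [zero_add] at h
  refine h.congr' ?_
  filter_upwards [eventually_ne_atTop 0] with ρ hρ
  field_simp
  ring

theorem log_mul_rpow {c m : ℝ} (hc : 0 < c) (hm : 0 < m) (t : ℝ) :
    log (c * m ^ t) = log c + t * log m := by
  rw [log_mul hc.ne' (rpow_pos_of_pos hm t).ne', log_rpow hm]

theorem tendsto_sSup_image_neg_log_div_atTop {ι : Type*} {S : Set ι} {Z : ℝ → ι → ℝ}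
    {P₀ : ι} (hP₀ : P₀ ∈ S) {c K m : ℝ} (hc : 0 < c) (hK : 0 < K) (hm : 0 < m)
    (hlow : ∀ ρ > 0, ∀ P ∈ S, c * m ^ (1 + ρ) ≤ Z ρ P)
    (hup : ∀ ρ > 0, Z ρ P₀ ≤ K * m ^ (1 + ρ)) :
    Tendsto (fun ρ => sSup ((fun P => -log (Z ρ P) / ρ) '' S)) atTop (𝓝 (-log m)) := by
  have hle : ∀ ρ > 0, ∀ P ∈ S, -log (Z ρ P) / ρ ≤ (-log c - (1 + ρ) * log m) / ρ := by
    intro ρ hρ P hP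
    have h := log_le_log (by positivity) (hlow ρ hρ P hP)
    rw [log_mul_rpow hc hm] at h
    exact div_le_div_of_nonneg_right (by linarith) hρ.le
  have hge : ∀ ρ > 0, (-log K - (1 + ρ) * log m) / ρ ≤ -log (Z ρ P₀) / ρ := by
    intro ρ hρ
    have hZ : 0 < Z ρ P₀ := lt_of_lt_of_le (by positivity) (hlow ρ hρ P₀ hP₀)
    have h := log_le_log hZ (hup ρ hρ)
    rw [log_mul_rpow hK hm] at h
    exact div_le_div_of_nonneg_right (by linarith) hρ.le
  have hbdd : ∀ ρ > 0, BddAbove ((fun P => -log (Z ρ P) / ρ) '' S) := fun ρ hρ =>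
    ⟨_, forall_mem_image.2 (hle ρ hρ)⟩
  refine tendsto_of_tendsto_of_tendsto_of_le_of_le' (tendsto_sub_one_add_mul_div_atTop (-log K) _)
    (tendsto_sub_one_add_mul_div_atTop (-log c) _) ?_ ?_
  · filter_upwards [eventually_gt_atTop 0] with ρ hρ
    exact (hge ρ hρ).trans (le_csSup (hbdd ρ hρ) (mem_image_of_mem _ hP₀))
  · filter_upwards [eventually_gt_atTop 0] with ρ hρ
    exact csSup_le (Nonempty.image _ ⟨P₀, hP₀⟩) (forall_mem_image.2 (hle ρ hρ))

theorem setOf_exists_stdSimplex_eq_image {X : Type*} [Fintype X] (g : (X → ℝ) → ℝ) :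
    {v | ∃ P : X → ℝ, (∀ x, 0 ≤ P x) ∧ ∑ x, P x = 1 ∧ v = g P} = g '' stdSimplex ℝ X := by
  ext v
  simp only [mem_ofPred_eq, mem_image, stdSimplex, and_assoc, eq_comm]

noncomputable section

variable {X Y : Type*} [Fintype X] (W : X → Y → ℝ)

/-- The paper's `P(X(y))`, where `X(y) = {x | 0 < W x y}`. -/
def supportMass (P : X → ℝ) (y : Y) : ℝ :=
  ∑ x ∈ univ.filter (fun x => 0 < W x y), P x

variable {W}

theorem sum_mul_rpow_le_supportMass {P : X → ℝ} {y : Y} (hP : ∀ x, 0 ≤ P x)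
    (hW0 : ∀ x, 0 ≤ W x y) (hW1 : ∀ x, W x y ≤ 1) {s : ℝ} (hs : 0 < s) :
    ∑ x, P x * W x y ^ s ≤ supportMass W P y := by
  rw [supportMass, sum_filter]
  refine sum_le_sum fun x _ => ?_
  split_ifs with h
  · exact mul_le_of_le_one_right (hP x) (rpow_le_one (hW0 x) (hW1 x) hs.le)
  · rw [le_antisymm (not_lt.1 h) (hW0 x), zero_rpow hs.ne', mul_zero]

theorem rpow_mul_supportMass_le_sum_mul_rpow {P : X → ℝ} {y : Y} (hP : ∀ x, 0 ≤ P x)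
    (hW0 : ∀ x, 0 ≤ W x y) {c s : ℝ} (hc : 0 ≤ c) (hcW : ∀ x, 0 < W x y → c ≤ W x y)
    (hs : 0 ≤ s) :
    c ^ s * supportMass W P y ≤ ∑ x, P x * W x y ^ s := by
  rw [supportMass, sum_filter, mul_sum]
  refine sum_le_sum fun x _ => ?_
  split_ifs with h
  · rw [mul_comm]
    exact mul_le_mul_of_nonneg_left (rpow_le_rpow hc (hcW x h) hs) (hP x)
  · rw [mul_zero]
    exact mul_nonneg (hP x) (rpow_nonneg (hW0 x) s)

variable [Fintype Y] (W)

def maxSupportMass (P : X → ℝ) : ℝ :=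
  ⨆ y, supportMass W P y

/-- `E₀(ρ, P) = -log (gallagerSum W ρ P)`. -/
def gallagerSum (ρ : ℝ) (P : X → ℝ) : ℝ :=
  ∑ y, (∑ x, P x * W x y ^ (1 / (1 + ρ))) ^ (1 + ρ)

theorem lowerSemicontinuous_maxSupportMass : LowerSemicontinuous (maxSupportMass W) :=
  lowerSemicontinuous_ciSup (fun _ => Finite.bddAbove_range _) fun _ =>
    (continuous_finsetSum _ fun x _ => continuous_apply x).lowerSemicontinuous

theorem exists_isLeast_image_maxSupportMass [Nonempty X] :
    ∃ P₀ ∈ stdSimplex ℝ X,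
      IsLeast (maxSupportMass W '' stdSimplex ℝ X) (maxSupportMass W P₀) := by
  classical
  obtain ⟨P₀, hP₀, hmin⟩ := (lowerSemicontinuous_maxSupportMass W).lowerSemicontinuousOn _
    |>.exists_isMinOn ⟨_, single_mem_stdSimplex ℝ (Classical.arbitrary X)⟩
      (isCompact_stdSimplex ℝ X)
  exact ⟨P₀, hP₀, mem_image_of_mem _ hP₀, forall_mem_image.2 (isMinOn_iff.1 hmin)⟩

variable {W}

theorem supportMass_le_maxSupportMass (P : X → ℝ) (y : Y) :
    supportMass W P y ≤ maxSupportMass W P :=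
  le_ciSup (Finite.bddAbove_range _) y

theorem maxSupportMass_pos {P : X → ℝ} (hP : P ∈ stdSimplex ℝ X)
    (hW : ∀ x, ∃ y, 0 < W x y) : 0 < maxSupportMass W P := by
  obtain ⟨x, -, hx⟩ := exists_lt_of_sum_lt (s := univ) (f := 0) (g := P) (by simp [hP.2])
  obtain ⟨y, hy⟩ := hW x
  calc 0 < P x := hx
    _ ≤ supportMass W P y :=
      single_le_sum (fun x _ => hP.1 x) (mem_filter.2 ⟨mem_univ x, hy⟩)
    _ ≤ maxSupportMass W P := supportMass_le_maxSupportMass P y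

theorem gallagerSum_le_card_mul_rpow {P : X → ℝ} (hP : ∀ x, 0 ≤ P x)
    (hW0 : ∀ x y, 0 ≤ W x y) (hW1 : ∀ x y, W x y ≤ 1) {ρ : ℝ} (hρ : -1 < ρ) :
    gallagerSum W ρ P ≤ Fintype.card Y * maxSupportMass W P ^ (1 + ρ) := by
  have hs : 0 < 1 / (1 + ρ) := one_div_pos.2 (by linarith)
  calc gallagerSum W ρ P ≤ ∑ _y : Y, maxSupportMass W P ^ (1 + ρ) :=
        sum_le_sum fun y _ => rpow_le_rpow
          (sum_nonneg fun x _ => mul_nonneg (hP x) (rpow_nonneg (hW0 x y) _))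
          ((sum_mul_rpow_le_supportMass hP (hW0 · y) (hW1 · y) hs).trans
            (supportMass_le_maxSupportMass P y)) (by linarith)
    _ = Fintype.card Y * maxSupportMass W P ^ (1 + ρ) := by
        rw [sum_const, card_univ, nsmul_eq_mul]

theorem mul_rpow_le_gallagerSum [Nonempty Y] {P : X → ℝ} (hP : ∀ x, 0 ≤ P x)
    (hW0 : ∀ x y, 0 ≤ W x y) {c m ρ : ℝ} (hc : 0 ≤ c) (hcW : ∀ x y, 0 < W x y → c ≤ W x y)
    (hm : 0 ≤ m) (hmP : m ≤ maxSupportMass W P) (hρ : -1 < ρ) :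
    c * m ^ (1 + ρ) ≤ gallagerSum W ρ P := by
  obtain ⟨y₀, hy₀⟩ := exists_eq_ciSup_of_finite (f := supportMass W P)
  set s := 1 / (1 + ρ)
  have hcs : (c ^ s) ^ (1 + ρ) = c := by
    rw [← rpow_mul hc, one_div_mul_cancel (by linarith), rpow_one]
  have hbase : c ^ s * m ≤ ∑ x, P x * W x y₀ ^ s :=
    calc c ^ s * m ≤ c ^ s * supportMass W P y₀ :=
          mul_le_mul_of_nonneg_left (hmP.trans_eq hy₀.symm) (rpow_nonneg hc s)
      _ ≤ _ := rpow_mul_supportMass_le_sum_mul_rpow hP (hW0 · y₀) hc (hcW · y₀)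
          (one_div_pos.2 (by linarith)).le
  calc c * m ^ (1 + ρ) = (c ^ s * m) ^ (1 + ρ) := by
        rw [mul_rpow (rpow_nonneg hc s) hm, hcs]
    _ ≤ (∑ x, P x * W x y₀ ^ s) ^ (1 + ρ) :=
        rpow_le_rpow (mul_nonneg (rpow_nonneg hc s) hm) hbase (by linarith)
    _ ≤ gallagerSum W ρ P :=
        single_le_sum (f := fun y => (∑ x, P x * W x y ^ s) ^ (1 + ρ))
          (fun y _ => rpow_nonneg (sum_nonneg fun x _ => mul_nonneg (hP x)
            (rpow_nonneg (hW0 x y) _)) _) (mem_univ y₀)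

end

/-- `lim_{ρ→∞} maxₚ E₀(ρ,P)/ρ = −log π₀`, where
`E₀(ρ,P) = −log ∑_y (∑_x P(x)W(y|x)^{1/(1+ρ)})^{1+ρ}`,
`π₀ = minₚ max_y P(X(y))` and `X(y) = {x : W(y|x) > 0}`,
both extrema taken over PMFs `P` on `X`. -/
theorem tendsto_max_E0_div_rho_neg_log_pi0
    {X Y : Type*} [Fintype X] [Fintype Y] [Nonempty X] [Nonempty Y]
    (W : X → Y → ℝ) (hW0 : ∀ x y, 0 ≤ W x y) (hW1 : ∀ x, ∑ y, W x y = 1) :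
    Tendsto (fun ρ : ℝ =>
        sSup {v : ℝ | ∃ P : X → ℝ, (∀ x, 0 ≤ P x) ∧ ∑ x, P x = 1 ∧
          v = (-Real.log (∑ y, (∑ x, P x * (W x y) ^ (1 / (1 + ρ))) ^ (1 + ρ))) / ρ})
      atTop
      (nhds (-Real.log (sInf {v : ℝ | ∃ P : X → ℝ, (∀ x, 0 ≤ P x) ∧ ∑ x, P x = 1 ∧
          v = ⨆ y, ∑ x ∈ univ.filter (fun x => 0 < W x y), P x}))) := by
  have hWle : ∀ x y, W x y ≤ 1 := fun x y =>
    (single_le_sum (fun y _ => hW0 x y) (mem_univ y)).trans_eq (hW1 x)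
  have hrow : ∀ x, ∃ y, 0 < W x y := fun x => by
    simpa using exists_lt_of_sum_lt (s := univ) (f := 0) (g := W x) (by simp [hW1 x])
  obtain ⟨c, hc, hcW⟩ := Finite.exists_pos_le_of_pos fun p : X × Y => W p.1 p.2
  obtain ⟨P₀, hP₀, hleast⟩ := exists_isLeast_image_maxSupportMass W
  have hm₀ := maxSupportMass_pos hP₀ hrow
  have hlim := tendsto_sSup_image_neg_log_div_atTop (Z := gallagerSum W) hP₀ hc
    (Nat.cast_pos.2 Fintype.card_pos) hm₀
    (fun ρ hρ P hP => mul_rpow_le_gallagerSum hP.1 hW0 hc.le (fun x y => hcW (x, y)) hm₀.le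
      (hleast.2 (mem_image_of_mem _ hP)) (by linarith))
    (fun ρ hρ => gallagerSum_le_card_mul_rpow hP₀.1 hW0 hWle (by linarith))
  rw [← hleast.csInf_eq] at hlim
  simp only [setOf_exists_stdSimplex_eq_image]
  exact hlim
end

section
/- Let X, Y be finite sets, W a channel, ρ > 0, and P a PMF on X, and let X(y) = {x : W(y|x) > 0}. If there exists y_0 ∈ Y with W(y_0|x) > 0 for all x in the support of P, then lim_{ρ→∞} E_0(ρ,P)/ρ = 0; otherwise (if for every y there is some x with P(x) > 0 and W(y|x) = 0), lim_{ρ→∞} E_0(ρ,P) = +∞ and lim_{ρ→∞} E_0(ρ,P)/ρ = −log max_{y∈Y} P(X(y)). In both cases lim_{ρ→∞} E_0(ρ,P)/ρ = −log max_{y∈Y} P(X(y)). -/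
open Finset Filter

/-- Pointwise limit of `E₀(ρ,P)/ρ` as `ρ → ∞`.  If some output `y₀` has `W(y₀|x) > 0`
for all `x` in the support of `P`, the limit is `0`; otherwise `E₀(ρ,P) → ∞` and
`E₀(ρ,P)/ρ → −log max_y P(X(y))`.  In both cases
`lim_{ρ→∞} E₀(ρ,P)/ρ = −log max_y P(X(y))`. -/
theorem tendsto_E0_div_rho {X Y : Type*} [Fintype X] [Fintype Y] [Nonempty Y]
    (W : X → Y → ℝ) (hW0 : ∀ x y, 0 ≤ W x y) (hW1 : ∀ x, ∑ y, W x y = 1)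
    (P : X → ℝ) (hP0 : ∀ x, 0 ≤ P x) (hP1 : ∑ x, P x = 1) :
    ((∃ y₀, ∀ x, 0 < P x → 0 < W x y₀) →
      Tendsto (fun ρ : ℝ =>
          (-Real.log (∑ y, (∑ x, P x * (W x y) ^ (1 / (1 + ρ))) ^ (1 + ρ))) / ρ)
        atTop (nhds 0)) ∧
    ((∀ y, ∃ x, 0 < P x ∧ W x y = 0) →
      (Tendsto (fun ρ : ℝ =>
          -Real.log (∑ y, (∑ x, P x * (W x y) ^ (1 / (1 + ρ))) ^ (1 + ρ)))
        atTop atTop ∧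
       Tendsto (fun ρ : ℝ =>
          (-Real.log (∑ y, (∑ x, P x * (W x y) ^ (1 / (1 + ρ))) ^ (1 + ρ))) / ρ)
        atTop
        (nhds (-Real.log (⨆ y, ∑ x ∈ univ.filter (fun x => 0 < W x y), P x))))) ∧
    Tendsto (fun ρ : ℝ =>
        (-Real.log (∑ y, (∑ x, P x * (W x y) ^ (1 / (1 + ρ))) ^ (1 + ρ))) / ρ)
      atTop
      (nhds (-Real.log (⨆ y, ∑ x ∈ univ.filter (fun x => 0 < W x y), P x))) := by
  classical
  set Q : Y → ℝ := fun y => ∑ x ∈ univ.filter (fun x => 0 < W x y), P x with hQdef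
  set M : ℝ := ⨆ y, Q y with hMdef
  set F : ℝ → ℝ := fun ρ => ∑ y, (∑ x, P x * (W x y) ^ (1 / (1 + ρ))) ^ (1 + ρ) with hFdef
  -- basic facts
  have hW1' : ∀ x y, W x y ≤ 1 := by
    intro x y
    calc W x y ≤ ∑ y', W x y' :=
          Finset.single_le_sum (fun y' _ => hW0 x y') (mem_univ y)
      _ = 1 := hW1 x
  have hQ0 : ∀ y, 0 ≤ Q y := fun y => Finset.sum_nonneg fun x _ => hP0 x
  have hQ1 : ∀ y, Q y ≤ 1 := by
    intro y
    rw [← hP1]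
    exact Finset.sum_le_sum_of_subset_of_nonneg (filter_subset _ _)
      (fun x _ _ => hP0 x)
  have hMle : ∀ y, Q y ≤ M := fun y => le_ciSup (Set.Finite.bddAbove (Set.finite_range Q)) y
  have hM1 : M ≤ 1 := ciSup_le hQ1
  -- existence of a positive entry
  obtain ⟨x0, hx0⟩ : ∃ x, 0 < P x := by
    by_contra h
    push_neg at h
    have : ∑ x, P x = 0 := Finset.sum_eq_zero fun x _ => le_antisymm (h x) (hP0 x)
    rw [hP1] at this; norm_num at this
  obtain ⟨y0', hy0'⟩ : ∃ y, 0 < W x0 y := by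
    by_contra h
    push_neg at h
    have : ∑ y, W x0 y = 0 := Finset.sum_eq_zero fun y _ => le_antisymm (h y) (hW0 x0 y)
    rw [hW1 x0] at this; norm_num at this
  have hx0Q : P x0 ≤ Q y0' := by
    refine Finset.single_le_sum (fun x _ => hP0 x) ?_
    simp [hy0']
  have hM0 : 0 < M := lt_of_lt_of_le (lt_of_lt_of_le hx0 hx0Q) (hMle y0')
  -- attainment of the sup
  obtain ⟨ystar, hystar⟩ : ∃ y, ∀ y', Q y' ≤ Q y := Finite.exists_max Q
  have hMstar : M = Q ystar := le_antisymm (ciSup_le hystar) (hMle ystar)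
  -- minimum positive channel value
  have hs : ((univ : Finset (X × Y)).filter (fun p => 0 < W p.1 p.2)).Nonempty :=
    ⟨(x0, y0'), Finset.mem_filter.2 ⟨mem_univ _, hy0'⟩⟩
  set c : ℝ := ((univ : Finset (X × Y)).filter (fun p => 0 < W p.1 p.2)).inf' hs
    (fun p => W p.1 p.2) with hcdef
  have hc0 : 0 < c := by
    rw [hcdef, Finset.lt_inf'_iff]
    intro p hp
    exact (Finset.mem_filter.1 hp).2
  have hcle : ∀ x y, 0 < W x y → c ≤ W x y := by
    intro x y h
    exact Finset.inf'_le (fun p : X × Y => W p.1 p.2)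
      (Finset.mem_filter.2 ⟨mem_univ (x, y), h⟩)
  -- cardinality
  have hcard : (0:ℝ) < (Fintype.card Y : ℝ) := by
    exact_mod_cast Fintype.card_pos
  -- the key bounds
  have key : ∀ ρ : ℝ, 0 < ρ →
      c * M ^ (1+ρ) ≤ F ρ ∧ F ρ ≤ (Fintype.card Y : ℝ) * M ^ (1+ρ) := by
    intro ρ hρ
    have h1ρ : (0:ℝ) < 1 + ρ := by linarith
    have he0 : (0:ℝ) < 1 / (1 + ρ) := by positivity
    set e : ℝ := 1 / (1 + ρ) with hedef
    have hS : ∀ y, (∑ x, P x * (W x y) ^ e)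
        = ∑ x ∈ univ.filter (fun x => 0 < W x y), P x * (W x y) ^ e := by
      intro y
      rw [← Finset.sum_filter_add_sum_filter_not univ (fun x => 0 < W x y)]
      have : ∑ x ∈ univ.filter (fun x => ¬ 0 < W x y), P x * (W x y) ^ e = 0 := by
        refine Finset.sum_eq_zero fun x hx => ?_
        have hW : W x y = 0 :=
          le_antisymm (not_lt.1 (Finset.mem_filter.1 hx).2) (hW0 x y)
        rw [hW, Real.zero_rpow (ne_of_gt he0), mul_zero]
      rw [this, add_zero]
    have hShigh : ∀ y, (∑ x, P x * (W x y) ^ e) ≤ Q y := by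
      intro y
      rw [hS y, hQdef]
      refine Finset.sum_le_sum fun x hx => ?_
      have h1 : (W x y) ^ e ≤ 1 :=
        Real.rpow_le_one (hW0 x y) (hW1' x y) he0.le
      calc P x * (W x y) ^ e ≤ P x * 1 := mul_le_mul_of_nonneg_left h1 (hP0 x)
        _ = P x := mul_one _
    have hSlow : ∀ y, Q y * c ^ e ≤ (∑ x, P x * (W x y) ^ e) := by
      intro y
      rw [hS y, hQdef, Finset.sum_mul]
      refine Finset.sum_le_sum fun x hx => ?_
      have hWx : 0 < W x y := (Finset.mem_filter.1 hx).2
      have : c ^ e ≤ (W x y) ^ e :=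
        Real.rpow_le_rpow hc0.le (hcle x y hWx) he0.le
      exact mul_le_mul_of_nonneg_left this (hP0 x)
    have hSnn : ∀ y, 0 ≤ (∑ x, P x * (W x y) ^ e) := by
      intro y
      exact Finset.sum_nonneg fun x _ =>
        mul_nonneg (hP0 x) (Real.rpow_nonneg (hW0 x y) e)
    have hfhigh : ∀ y, ((∑ x, P x * (W x y) ^ e)) ^ (1+ρ) ≤ (Q y) ^ (1+ρ) :=
      fun y => Real.rpow_le_rpow (hSnn y) (hShigh y) h1ρ.le
    have hflow : ∀ y, (Q y) ^ (1+ρ) * c ≤ ((∑ x, P x * (W x y) ^ e)) ^ (1+ρ) := by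
      intro y
      have h1 : (Q y * c ^ e) ^ (1+ρ) ≤ ((∑ x, P x * (W x y) ^ e)) ^ (1+ρ) :=
        Real.rpow_le_rpow (mul_nonneg (hQ0 y) (Real.rpow_nonneg hc0.le e))
          (hSlow y) h1ρ.le
      have hce : (c ^ e) ^ (1+ρ) = c := by
        rw [← Real.rpow_mul hc0.le, hedef, one_div,
          inv_mul_cancel₀ (ne_of_gt h1ρ), Real.rpow_one]
      have h2 : (Q y * c ^ e) ^ (1+ρ) = (Q y) ^ (1+ρ) * c := by
        rw [Real.mul_rpow (hQ0 y) (Real.rpow_nonneg hc0.le e), hce]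
      rw [← h2]; exact h1
    constructor
    · calc c * M ^ (1+ρ) = (Q ystar) ^ (1+ρ) * c := by rw [hMstar]; ring
        _ ≤ ∑ y, (Q y) ^ (1+ρ) * c := by
            refine Finset.single_le_sum (f := fun y => (Q y) ^ (1+ρ) * c)
              (fun y _ => ?_) (mem_univ ystar)
            exact mul_nonneg (Real.rpow_nonneg (hQ0 y) _) hc0.le
        _ ≤ F ρ := Finset.sum_le_sum fun y _ => hflow y
    · calc F ρ ≤ ∑ y, (Q y) ^ (1+ρ) := Finset.sum_le_sum fun y _ => hfhigh y
        _ ≤ ∑ _y : Y, M ^ (1+ρ) :=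
            Finset.sum_le_sum fun y _ => Real.rpow_le_rpow (hQ0 y) (hMle y) h1ρ.le
        _ = (Fintype.card Y : ℝ) * M ^ (1+ρ) := by
            rw [Finset.sum_const, nsmul_eq_mul, Fintype.card]
  -- logarithmic bounds, for ρ > 0
  have hlog : ∀ ρ : ℝ, 0 < ρ →
      (-Real.log (Fintype.card Y : ℝ) - (1+ρ) * Real.log M ≤ -Real.log (F ρ) ∧
       -Real.log (F ρ) ≤ -Real.log c - (1+ρ) * Real.log M) := by
    intro ρ hρ
    obtain ⟨hlo, hhi⟩ := key ρ hρ
    have hMpow : (0:ℝ) < M ^ (1+ρ) := Real.rpow_pos_of_pos hM0 _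
    have hFpos : 0 < F ρ := lt_of_lt_of_le (by positivity) hlo
    constructor
    · have := Real.log_le_log hFpos hhi
      rw [Real.log_mul (ne_of_gt hcard) (ne_of_gt hMpow),
        Real.log_rpow hM0] at this
      linarith
    · have := Real.log_le_log (by positivity) hlo
      rw [Real.log_mul (ne_of_gt hc0) (ne_of_gt hMpow),
        Real.log_rpow hM0] at this
      linarith
  set L : ℝ := Real.log M with hLdef
  -- limit helper
  have hlim : ∀ A : ℝ, Tendsto (fun ρ : ℝ => (A - (1+ρ)*L)/ρ) atTop (nhds (-L)) := by
    intro A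
    have h1 : Tendsto (fun ρ : ℝ => (A - L) * ρ⁻¹ - L) atTop (nhds (-L)) := by
      have := (tendsto_inv_atTop_zero.const_mul (A - L)).sub_const L
      simpa using this
    refine h1.congr' ?_
    filter_upwards [eventually_gt_atTop (0:ℝ)] with ρ hρ
    field_simp
    ring
  -- the main (third) statement
  have main : Tendsto (fun ρ : ℝ => (-Real.log (F ρ)) / ρ) atTop (nhds (-L)) := by
    refine tendsto_of_tendsto_of_tendsto_of_le_of_le'
      (hlim (-Real.log (Fintype.card Y : ℝ))) (hlim (-Real.log c)) ?_ ?_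
    · filter_upwards [eventually_gt_atTop (0:ℝ)] with ρ hρ
      exact div_le_div_of_nonneg_right ((hlog ρ hρ).1) hρ.le
    · filter_upwards [eventually_gt_atTop (0:ℝ)] with ρ hρ
      exact div_le_div_of_nonneg_right ((hlog ρ hρ).2) hρ.le
  refine ⟨?_, ?_, main⟩
  · rintro ⟨y0, hy0⟩
    have hQy0 : Q y0 = 1 := by
      refine le_antisymm (hQ1 y0) ?_
      rw [hQdef, ← hP1]
      rw [← Finset.sum_filter_add_sum_filter_not univ (fun x => 0 < W x y0)]
      have hz : ∑ x ∈ univ.filter (fun x => ¬ 0 < W x y0), P x = 0 := by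
        refine Finset.sum_eq_zero fun x hx => ?_
        by_contra hPx
        exact (Finset.mem_filter.1 hx).2 (hy0 x (lt_of_le_of_ne (hP0 x) (Ne.symm hPx)))
      rw [hz, add_zero]
    have hMeq : M = 1 := le_antisymm hM1 (hQy0 ▸ hMle y0)
    have hL0 : L = 0 := by rw [hLdef, hMeq, Real.log_one]
    have := main
    rw [hL0, neg_zero] at this
    exact this
  · intro h
    have hMlt : M < 1 := by
      obtain ⟨x, hPx, hWx⟩ := h ystar
      have hQle : Q ystar ≤ 1 - P x := by
        have hsub : univ.filter (fun x' => 0 < W x' ystar) ⊆ univ.erase x := by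
          intro x' hx'
          rcases Finset.mem_filter.1 hx' with ⟨-, hpos⟩
          refine Finset.mem_erase.2 ⟨?_, mem_univ x'⟩
          rintro rfl
          rw [hWx] at hpos; exact lt_irrefl 0 hpos
        have h1 : Q ystar ≤ ∑ x' ∈ univ.erase x, P x' :=
          Finset.sum_le_sum_of_subset_of_nonneg hsub (fun x' _ _ => hP0 x')
        have h2 : ∑ x' ∈ univ.erase x, P x' = 1 - P x := by
          rw [Finset.sum_erase_eq_sub (mem_univ x), hP1]
        linarith
      calc M = Q ystar := hMstar
        _ ≤ 1 - P x := hQle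
        _ < 1 := by linarith
    have hL : L < 0 := Real.log_neg hM0 hMlt
    refine ⟨?_, main⟩
    refine tendsto_atTop_mono' atTop
      (f₁ := fun ρ : ℝ => -Real.log (Fintype.card Y : ℝ) - (1+ρ)*L) ?_ ?_
    · filter_upwards [eventually_gt_atTop (0:ℝ)] with ρ hρ
      exact (hlog ρ hρ).1
    · have h1 : Tendsto (fun ρ : ℝ => -Real.log (Fintype.card Y : ℝ) + (1+ρ)*(-L))
          atTop atTop := by
        refine tendsto_atTop_add_const_left _ _ ?_
        exact Tendsto.atTop_mul_const (by linarith)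
          (tendsto_atTop_add_const_left _ 1 tendsto_id)
      refine h1.congr fun ρ => by ring
end

section
/- Let W be an ε-noise channel on a finite alphabet X (i.e., input and output alphabet X and W(x|x) ≥ 1 − ε for all x ∈ X), let ξ > 0, and let P be the uniform PMF on X. Then E_0(ξ,P) ≥ ξ log|X| − (1+ξ) log(1 + (|X|−1) ε^{1/(1+ξ)}), where E_0(ξ,P) = (1+ξ) log|X| − log ∑_{y∈X} (∑_{x∈X} W(y|x)^{1/(1+ξ)})^{1+ξ}. -/
/-- For an ε-noise channel `W` on a finite alphabet `X` (`W(x|x) ≥ 1−ε`), `ξ > 0`,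
and the uniform input PMF, Gallager's function satisfies
`E₀(ξ,P) ≥ ξ log|X| − (1+ξ) log(1 + (|X|−1) ε^{1/(1+ξ)})`, where
`E₀(ξ,P) = (1+ξ) log|X| − log ∑_y (∑_x W(y|x)^{1/(1+ξ)})^{1+ξ}`. -/
theorem E0_uniform_epsilon_noise_lower_bound {X : Type*} [Fintype X] [Nonempty X]
    (W : X → X → ℝ) (hW0 : ∀ x y, 0 ≤ W x y) (hW1 : ∀ x, ∑ y, W x y = 1)
    (ε : ℝ) (hε : 0 ≤ ε) (hnoise : ∀ x, 1 - ε ≤ W x x)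
    (ξ : ℝ) (hξ : 0 < ξ) :
    (1 + ξ) * Real.log (Fintype.card X)
        - Real.log (∑ y, (∑ x, (W x y) ^ (1 / (1 + ξ))) ^ (1 + ξ))
      ≥ ξ * Real.log (Fintype.card X)
        - (1 + ξ) * Real.log (1 + ((Fintype.card X : ℝ) - 1) * ε ^ (1 / (1 + ξ))) := by
  classical
  set α : ℝ := 1 / (1 + ξ) with hα
  have h1ξ : (0:ℝ) < 1 + ξ := by linarith
  have hα0 : 0 < α := by positivity
  set n : ℕ := Fintype.card X with hn
  have hn0 : 0 < n := Fintype.card_pos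
  set B : ℝ := 1 + ((n : ℝ) - 1) * ε ^ α with hB
  have hn1 : (1:ℝ) ≤ (n:ℝ) := by exact_mod_cast hn0
  have hεα : 0 ≤ ε ^ α := Real.rpow_nonneg hε α
  have hB1 : (1:ℝ) ≤ B := by
    have : 0 ≤ ((n:ℝ) - 1) * ε ^ α := mul_nonneg (by linarith) hεα
    simp only [hB]; linarith
  have hB0 : 0 < B := lt_of_lt_of_le one_pos hB1
  -- each entry ≤ 1, off diagonal ≤ ε
  have hWle1 : ∀ x y, W x y ≤ 1 := by
    intro x y
    calc W x y ≤ ∑ y', W x y' :=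
      Finset.single_le_sum (fun i _ => hW0 x i) (Finset.mem_univ y)
    _ = 1 := hW1 x
  have hoff : ∀ x y, x ≠ y → W x y ≤ ε := by
    intro x y hxy
    have h2 : W x x + W x y ≤ ∑ y', W x y' := by
      have := Finset.add_sum_erase Finset.univ (W x) (Finset.mem_univ x)
      rw [← this]
      have : W x y ≤ ∑ y' ∈ Finset.univ.erase x, W x y' :=
        Finset.single_le_sum (fun i _ => hW0 x i)
          (Finset.mem_erase.mpr ⟨fun h => hxy h.symm, Finset.mem_univ y⟩)
      linarith
    rw [hW1 x] at h2
    have := hnoise x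
    linarith
  -- inner sum bound
  have hinner : ∀ y, ∑ x, (W x y) ^ α ≤ B := by
    intro y
    have hsplit := Finset.add_sum_erase Finset.univ (fun x => (W x y) ^ α)
      (Finset.mem_univ y)
    rw [← hsplit]
    have h1 : (W y y) ^ α ≤ 1 := Real.rpow_le_one (hW0 y y) (hWle1 y y) (le_of_lt hα0)
    have h2 : ∑ x ∈ Finset.univ.erase y, (W x y) ^ α ≤ ((n:ℝ) - 1) * ε ^ α := by
      have hcard : (Finset.univ.erase y).card = n - 1 := by
        rw [Finset.card_erase_of_mem (Finset.mem_univ y)]; rfl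
      calc ∑ x ∈ Finset.univ.erase y, (W x y) ^ α
          ≤ ∑ _x ∈ Finset.univ.erase y, ε ^ α := by
            apply Finset.sum_le_sum
            intro x hx
            exact Real.rpow_le_rpow (hW0 x y)
              (hoff x y (Finset.mem_erase.mp hx).1) (le_of_lt hα0)
        _ = ((n:ℝ) - 1) * ε ^ α := by
            rw [Finset.sum_const, hcard, nsmul_eq_mul, Nat.cast_sub hn0]
            norm_num
    simp only [hB]; linarith
  -- total sum bound
  set S : ℝ := ∑ y, (∑ x, (W x y) ^ α) ^ (1 + ξ) with hS
  have hinner_nonneg : ∀ y, 0 ≤ ∑ x, (W x y) ^ α :=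
    fun y => Finset.sum_nonneg fun x _ => Real.rpow_nonneg (hW0 x y) α
  have hSle : S ≤ (n : ℝ) * B ^ (1 + ξ) := by
    calc S ≤ ∑ _y : X, B ^ (1 + ξ) := by
          apply Finset.sum_le_sum
          intro y _
          exact Real.rpow_le_rpow (hinner_nonneg y) (hinner y) (le_of_lt h1ξ)
      _ = (n : ℝ) * B ^ (1 + ξ) := by
          rw [Finset.sum_const, nsmul_eq_mul]; rfl
  -- S is positive
  have hSpos : 0 < S := by
    obtain ⟨x₀⟩ := (inferInstance : Nonempty X)
    have : ∃ y, 0 < W x₀ y := by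
      by_contra h
      push_neg at h
      have : ∑ y, W x₀ y = 0 :=
        Finset.sum_eq_zero fun y _ => le_antisymm (h y) (hW0 x₀ y)
      rw [hW1 x₀] at this; norm_num at this
    obtain ⟨y₀, hy₀⟩ := this
    have hin : 0 < ∑ x, (W x y₀) ^ α := by
      have h1 : (0:ℝ) < (W x₀ y₀) ^ α := Real.rpow_pos_of_pos hy₀ α
      have h2 : (W x₀ y₀) ^ α ≤ ∑ x, (W x y₀) ^ α :=
        Finset.single_le_sum (fun i _ => Real.rpow_nonneg (hW0 i y₀) α)
          (Finset.mem_univ x₀)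
      linarith
    have h1 : (0:ℝ) < (∑ x, (W x y₀) ^ α) ^ (1 + ξ) := Real.rpow_pos_of_pos hin _
    have h2 : (∑ x, (W x y₀) ^ α) ^ (1 + ξ) ≤ S :=
      Finset.single_le_sum (fun y _ => Real.rpow_nonneg (hinner_nonneg y) _)
        (Finset.mem_univ y₀)
    linarith
  -- log bound
  have hlog : Real.log S ≤ Real.log n + (1 + ξ) * Real.log B := by
    calc Real.log S ≤ Real.log ((n:ℝ) * B ^ (1 + ξ)) := Real.log_le_log hSpos hSle
      _ = Real.log n + (1 + ξ) * Real.log B := by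
          rw [Real.log_mul (by positivity) (by positivity), Real.log_rpow hB0]
  have := hlog
  linarith
end

section
/- Let P be a PMF on a finite set X and W a channel with the property that there exist functions A : X → (0,∞) and B : Y → (0,∞) such that W(y|x) = A(x)B(y) whenever W(y|x) > 0. Then for any n ≥ 1, any two sequences x, x' ∈ X^n of the same type (i.e., having identical empirical distributions), and any y ∈ Y^n with W^n(y|x) > 0 and W^n(y|x') > 0, we have W^n(y|x) = W^n(y|x'), where W^n(y|x) = ∏_{i=1}^n W(y_i|x_i). -/
open Finset

/-- If `W(y|x) = A(x)B(y)` whenever `W(y|x) > 0` (Csiszár–Narayan factorization), then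
any two sequences `x, x'` of the same type with `Wⁿ(y|x) > 0` and `Wⁿ(y|x') > 0`
satisfy `Wⁿ(y|x) = Wⁿ(y|x')`. -/
theorem likelihood_eq_of_same_type {X Y : Type*} [Fintype X] [Fintype Y] [DecidableEq X]
    (W : X → Y → ℝ) (hW0 : ∀ x y, 0 ≤ W x y) (hW1 : ∀ x, ∑ y, W x y = 1)
    (A : X → ℝ) (B : Y → ℝ) (hA : ∀ x, 0 < A x) (hB : ∀ y, 0 < B y)
    (hfac : ∀ x y, 0 < W x y → W x y = A x * B y)
    (n : ℕ) (hn : 1 ≤ n) (x x' : Fin n → X) (y : Fin n → Y)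
    (htype : ∀ a : X, (univ.filter (fun i => x i = a)).card
      = (univ.filter (fun i => x' i = a)).card)
    (hx : 0 < ∏ i, W (x i) (y i)) (hx' : 0 < ∏ i, W (x' i) (y i)) :
    ∏ i, W (x i) (y i) = ∏ i, W (x' i) (y i) := by
  have hpos : ∀ (z : Fin n → X), 0 < ∏ i, W (z i) (y i) → ∀ i, 0 < W (z i) (y i) := by
    intro z hz i
    rcases lt_or_eq_of_le (hW0 (z i) (y i)) with h | h
    · exact h
    · exact absurd (Finset.prod_eq_zero (mem_univ i) h.symm) (ne_of_gt hz)
  have key : ∀ (z : Fin n → X),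
      ∏ i, A (z i) = ∏ a : X, A a ^ (univ.filter (fun i => z i = a)).card := by
    intro z
    rw [← Finset.prod_fiberwise_of_maps_to (fun i _ => mem_univ (z i)) (fun i => A (z i))]
    refine Finset.prod_congr rfl fun a _ => ?_
    rw [Finset.prod_congr rfl (fun i hi => ?_), Finset.prod_const]
    rw [(Finset.mem_filter.mp hi).2]
  calc ∏ i, W (x i) (y i) = ∏ i, A (x i) * B (y i) :=
        Finset.prod_congr rfl fun i _ => hfac _ _ (hpos x hx i)
    _ = (∏ i, A (x i)) * ∏ i, B (y i) := Finset.prod_mul_distrib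
    _ = (∏ i, A (x' i)) * ∏ i, B (y i) := by
        rw [key x, key x']
        congr 1
        exact Finset.prod_congr rfl fun a _ => by rw [htype a]
    _ = ∏ i, A (x' i) * B (y i) := Finset.prod_mul_distrib.symm
    _ = ∏ i, W (x' i) (y i) :=
        (Finset.prod_congr rfl fun i _ => (hfac _ _ (hpos x' hx' i)).symm)
end
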